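/- arXiv:2112.12646 — 8 statements merged into one kernel-verified Lean document; each statement's English description precedes it below -/
import Mathlib

section
/- A metric space E is injective if and only if it is hyperconvex. Here E is injective means: for every metric space X̃, every subset X ⊆ X̃ (with the induced metric), and every 1-Lipschitz map f : X → E, there exists a 1-Lipschitz map f̃ : X̃ → E with f̃|_X = f. -/
universe u

noncomputable def optDist {E : Type u} [MetricSpace E] (s : E → ℝ) :
    Option E → Option E → ℝ
  | some a, some b => dist a b
  | some a, none => s a
  | none, some b => s b
  | none, none => 0

noncomputable def optMetric {E : Type u} [MetricSpace E] (s : E → ℝ)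
    (hpos : ∀ a, 0 < s a)
    (h2 : ∀ a b, dist a b ≤ s a + s b)
    (h3 : ∀ a b, s a ≤ s b + dist a b) : MetricSpace (Option E) where
  dist := optDist s
  dist_self := by rintro (_ | a) <;> simp [optDist]
  dist_comm := by
    rintro (_ | a) (_ | b) <;> simp [optDist, dist_comm]
  dist_triangle := by
    have hs0 : ∀ a, 0 ≤ s a := fun a => (hpos a).le
    rintro (_ | a) (_ | b) (_ | c) <;> simp only [optDist]
    · norm_num
    · linarith [hs0 c]
    · linarith [hs0 b]
    · linarith [h3 c b, dist_comm c b]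
    · linarith [hs0 a]
    · exact h2 a c
    · linarith [h3 a b]
    · exact dist_triangle a b c
  eq_of_dist_eq_zero := by
    rintro (_ | a) (_ | b) h <;> simp only [optDist] at h
    · rfl
    · exact absurd h (ne_of_gt (hpos b))
    · exact absurd h (ne_of_gt (hpos a))
    · rw [dist_eq_zero] at h; rw [h]

/-- A metric space `E` is injective if and only if it is hyperconvex. -/
theorem injective_iff_hyperconvex {E : Type u} [MetricSpace E] :
    (∀ (Y : Type u) [MetricSpace Y] (X : Set Y) (f : X → E), LipschitzWith 1 f →
      ∃ g : Y → E, LipschitzWith 1 g ∧ ∀ x : X, g (x : Y) = f x) ↔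
    (∀ (I : Type u) (x : I → E) (r : I → ℝ), (∀ i, 0 ≤ r i) →
      (∀ i j, dist (x i) (x j) ≤ r i + r j) →
      ∃ c : E, ∀ i, dist (x i) c ≤ r i) := by
  constructor
  · -- injective → hyperconvex
    intro h I x r hr hxr
    -- E is nonempty
    obtain ⟨e₀⟩ : Nonempty E := by
      obtain ⟨g, -, -⟩ := h PUnit (∅ : Set PUnit)
        (fun p => absurd p.2 (Set.notMem_empty _))
        (LipschitzWith.of_dist_le_mul fun p => absurd p.2 (Set.notMem_empty _))
      exact ⟨g PUnit.unit⟩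
    by_cases hI : Nonempty I
    swap
    · exact ⟨e₀, fun i => absurd ⟨i⟩ hI⟩
    -- the distance function from the new point
    set s : E → ℝ := fun a => ⨅ i, (r i + dist (x i) a) with hs
    have bdd : ∀ a : E, BddBelow (Set.range fun i => r i + dist (x i) a) :=
      fun a => ⟨0, by
        rintro t ⟨i, rfl⟩
        have h₁ := hr i
        have h₂ : (0:ℝ) ≤ dist (x i) a := dist_nonneg
        show (0:ℝ) ≤ r i + dist (x i) a
        linarith⟩
    have h1 : ∀ (a : E) (i : I), s a ≤ r i + dist (x i) a := fun a i => ciInf_le (bdd a) i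
    have h2 : ∀ a b : E, dist a b ≤ s a + s b := by
      intro a b
      have key : ∀ i, dist a b - s b ≤ r i + dist (x i) a := by
        intro i
        have : dist a b - (r i + dist (x i) a) ≤ s b := by
          apply le_ciInf
          intro j
          have t1 := dist_triangle4 a (x i) (x j) b
          have t2 := hxr i j
          rw [dist_comm a (x i)] at t1
          linarith
        linarith
      have := le_ciInf key
      linarith
    have h3 : ∀ a b : E, s a ≤ s b + dist a b := by
      intro a b
      have key : ∀ j, s a - dist a b ≤ r j + dist (x j) b := by
        intro j
        have := h1 a j
        have t1 := dist_triangle (x j) b a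
        rw [dist_comm b a] at t1
        linarith
      have := le_ciInf key
      linarith
    have hs0 : ∀ a, 0 ≤ s a := fun a => le_ciInf (fun i => by
      have h₁ := hr i
      have h₂ : (0:ℝ) ≤ dist (x i) a := dist_nonneg
      show (0:ℝ) ≤ r i + dist (x i) a
      linarith)
    by_cases hz : ∃ a, s a = 0
    · -- a point with s a = 0 is already a center
      obtain ⟨a, ha⟩ := hz
      refine ⟨a, fun i => ?_⟩
      have := h2 (x i) a
      have := h1 (x i) i
      simp only [dist_self] at this
      linarith [h2 (x i) a, h1 (x i) i]
    · have hpos : ∀ a, 0 < s a := fun a => lt_of_le_of_ne (hs0 a) (Ne.symm (fun h => hz ⟨a, h⟩))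
      letI : MetricSpace (Option E) := optMetric s hpos h2 h3
      set X : Set (Option E) := Set.range some with hX
      have hmem : ∀ p : X, (p : Option E).isSome := by
        rintro ⟨p, a, rfl⟩; rfl
      set f : X → E := fun p => Option.get _ (hmem p) with hf
      have hcoe : ∀ p : X, (p : Option E) = some (f p) := fun p => (Option.some_get (hmem p)).symm
      have hfl : LipschitzWith 1 f := by
        apply LipschitzWith.of_dist_le_mul
        intro p q
        rw [NNReal.coe_one, one_mul, Subtype.dist_eq, hcoe p, hcoe q]
        exact le_refl _
      obtain ⟨g, hg, hgf⟩ := h (Option E) X f hfl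
      refine ⟨g none, fun i => ?_⟩
      have hxi : (some (x i) : Option E) ∈ X := ⟨x i, rfl⟩
      have h4 : g (some (x i)) = x i := by
        have := hgf ⟨some (x i), hxi⟩
        rw [this]
        simp [hf]
      have h5 : dist (g (some (x i))) (g none) ≤ dist (some (x i) : Option E) none := by
        have := hg.dist_le_mul (some (x i)) none
        rwa [NNReal.coe_one, one_mul] at this
      have h6 : dist (some (x i) : Option E) none = s (x i) := rfl
      have h7 : s (x i) ≤ r i := by
        have := h1 (x i) i
        simp only [dist_self] at this
        linarith
      rw [h4, h6] at h5
      exact le_trans h5 h7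
  · -- hyperconvex → injective
    intro h2 Y _ X f hf
    -- E is nonempty
    obtain ⟨e₀⟩ : Nonempty E := by
      obtain ⟨c, -⟩ := h2 (ULift Empty) (fun i => i.down.elim) (fun i => 0)
        (fun i => i.down.elim) (fun i => i.down.elim)
      exact ⟨c⟩
    set 𝒢 : Set (Set (Y × E)) :=
      {G | (∀ x : X, ((x : Y), f x) ∈ G) ∧ ∀ p ∈ G, ∀ q ∈ G,
        dist (Prod.snd p) (Prod.snd q) ≤ dist (Prod.fst p) (Prod.fst q)} with h𝒢
    have hG₀ : Set.range (fun x : X => ((x : Y), f x)) ∈ 𝒢 := by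
      constructor
      · exact fun x => ⟨x, rfl⟩
      · rintro p ⟨a, rfl⟩ q ⟨b, rfl⟩
        have := hf.dist_le_mul a b
        rw [NNReal.coe_one, one_mul, Subtype.dist_eq] at this
        exact this
    obtain ⟨M, hM₀, hMmem, hMmax⟩ :
        ∃ M, Set.range (fun x : X => ((x : Y), f x)) ⊆ M ∧ M ∈ 𝒢 ∧
          ∀ G ∈ 𝒢, M ⊆ G → G ⊆ M := by
      have hch : ∀ c ⊆ 𝒢, IsChain (· ⊆ ·) c → c.Nonempty →
          ∃ ub ∈ 𝒢, ∀ s ∈ c, s ⊆ ub := by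
        intro c hc hchain hcne
        refine ⟨⋃₀ c, ⟨?_, ?_⟩, fun s hs => Set.subset_sUnion_of_mem hs⟩
        · intro x
          obtain ⟨G, hG⟩ := hcne
          exact Set.mem_sUnion_of_mem ((hc hG).1 x) hG
        · rintro p ⟨G₁, hG₁, hpG₁⟩ q ⟨G₂, hG₂, hqG₂⟩
          rcases hchain.total hG₁ hG₂ with hsub | hsub
          · exact (hc hG₂).2 p (hsub hpG₁) q hqG₂
          · exact (hc hG₁).2 p hpG₁ q (hsub hqG₂)
      obtain ⟨M, hM₀, hMmax⟩ := zorn_subset_nonempty 𝒢 hch _ hG₀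
      exact ⟨M, hM₀, hMmax.prop, fun G hG hMG => hMmax.le_of_ge hG hMG⟩
    -- every point of Y is in the domain of M
    have htot : ∀ y : Y, ∃ e : E, (y, e) ∈ M := by
      intro y
      by_contra hne
      push_neg at hne
      obtain ⟨c, hc⟩ := h2 (↥M) (fun p => (p : Y × E).2) (fun p => dist (p : Y × E).1 y)
        (fun p => dist_nonneg)
        (fun p q => by
          have h₁ := hMmem.2 (p : Y × E) p.2 (q : Y × E) q.2
          have h₂ := dist_triangle_right (p : Y × E).1 (q : Y × E).1 y
          linarith)
      have hins : insert (y, c) M ∈ 𝒢 := by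
        constructor
        · exact fun x => Set.mem_insert_of_mem _ (hMmem.1 x)
        · rintro p (rfl | hp) q (rfl | hq)
          · simp
          · have := hc ⟨q, hq⟩
            simp only [dist_comm] at this ⊢
            exact this
          · exact hc ⟨p, hp⟩
          · exact hMmem.2 p hp q hq
      have : (y, c) ∈ M := hMmax _ hins (Set.subset_insert _ _) (Set.mem_insert _ _)
      exact hne c this
    set g : Y → E := fun y => Classical.choose (htot y) with hg
    have hgmem : ∀ y : Y, (y, g y) ∈ M := fun y => Classical.choose_spec (htot y)
    refine ⟨g, ?_, ?_⟩
    · apply LipschitzWith.of_dist_le_mul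
      intro y y'
      rw [NNReal.coe_one, one_mul]
      exact hMmem.2 (y, g y) (hgmem y) (y', g y') (hgmem y')
    · intro x
      have h₁ : ((x : Y), f x) ∈ M := hM₀ ⟨x, rfl⟩
      have h₂ : ((x : Y), g x) ∈ M := hgmem x
      have := hMmem.2 ((x : Y), g x) h₂ ((x : Y), f x) h₁
      simp only [dist_self] at this
      exact eq_of_dist_eq_zero (le_antisymm this dist_nonneg)
end

section
/- Every nonempty hyperconvex metric space is contractible. -/
/-!
A hyperconvex space `E` is injective for `1`-Lipschitz maps (Aronszajn–Panitchpakdi): a maximal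
`1`-Lipschitz partial relation into `E` is total, because one more point can always be added by
intersecting the balls `B̄(f a, dist a x)`. Fix `p : E` and equip `E × ℝ` with the `ℓ¹` metric.
The map that is the projection on `E × {0}` and constant `p` on the graph of `dist · p` is
`1`-Lipschitz there, so it extends to a `1`-Lipschitz `F`, and `(t, x) ↦ F (x, t · dist x p)`
contracts `E` to `p`.
-/

universe u

open Set

def IsHyperconvex (E : Type u) [PseudoMetricSpace E] : Prop :=
  ∀ (I : Type u) (x : I → E) (r : I → ℝ), (∀ i, 0 ≤ r i) →
    (∀ i j, dist (x i) (x j) ≤ r i + r j) → ∃ c : E, ∀ i, dist (x i) c ≤ r i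

section Extension

variable {X E : Type u} [PseudoMetricSpace X]

def IsNonexpansiveRel [PseudoMetricSpace E] (G : Set (X × E)) : Prop :=
  ∀ q ∈ G, ∀ q' ∈ G, dist q.2 q'.2 ≤ dist q.1 q'.1

theorem IsNonexpansiveRel.sUnion_of_isChain [PseudoMetricSpace E] {c : Set (Set (X × E))}
    (hc : ∀ G ∈ c, IsNonexpansiveRel G) (hchain : IsChain (· ⊆ ·) c) :
    IsNonexpansiveRel (⋃₀ c) := by
  rintro q ⟨G, hG, hq⟩ q' ⟨G', hG', hq'⟩
  rcases hchain.total hG hG' with h | h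
  · exact hc G' hG' q (h hq) q' hq'
  · exact hc G hG q hq q' (h hq')

theorem IsHyperconvex.exists_insert_isNonexpansiveRel [PseudoMetricSpace E]
    (hE : IsHyperconvex E) {G : Set (X × E)} (hG : IsNonexpansiveRel G) (x : X) :
    ∃ c : E, IsNonexpansiveRel (insert (x, c) G) := by
  obtain ⟨c, hc⟩ := hE G (fun q => q.1.2) (fun q => dist q.1.1 x) (fun _ => dist_nonneg)
    fun q q' => (hG _ q.2 _ q'.2).trans (dist_triangle_right _ _ _)
  refine ⟨c, ?_⟩
  rintro q (rfl | hq) q' (rfl | hq')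
  · simp
  · simpa [dist_comm] using hc ⟨q', hq'⟩
  · exact hc ⟨q, hq⟩
  · exact hG q hq q' hq'

theorem IsHyperconvex.exists_lipschitzWith_extension [MetricSpace E] (hE : IsHyperconvex E)
    {A : Set X} {f : X → E} (hf : LipschitzOnWith 1 f A) :
    ∃ F : X → E, LipschitzWith 1 F ∧ EqOn F f A := by
  let S : Set (Set (X × E)) := {G | (fun a => (a, f a)) '' A ⊆ G ∧ IsNonexpansiveRel G}
  have hgraph : (fun a => (a, f a)) '' A ∈ S := by
    refine ⟨subset_rfl, ?_⟩
    rintro _ ⟨a, ha, rfl⟩ _ ⟨b, hb, rfl⟩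
    simpa using hf.dist_le_mul a ha b hb
  obtain ⟨M, -, hM⟩ := zorn_subset_nonempty S
    (fun c hcS hchain ⟨G, hG⟩ => ⟨⋃₀ c,
      ⟨(hcS hG).1.trans (subset_sUnion_of_mem hG),
        IsNonexpansiveRel.sUnion_of_isChain (fun G hG => (hcS hG).2) hchain⟩,
      fun _ => subset_sUnion_of_mem⟩) _ hgraph
  have htotal : ∀ x, ∃ y, (x, y) ∈ M := fun x => by
    obtain ⟨c, hc⟩ := hE.exists_insert_isNonexpansiveRel hM.prop.2 x
    have hmax := hM.eq_of_le (y := insert (x, c) M)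
      ⟨hM.prop.1.trans (subset_insert _ _), hc⟩ (subset_insert _ _)
    exact ⟨c, hmax ▸ mem_insert _ _⟩
  choose F hF using htotal
  refine ⟨F, LipschitzWith.of_dist_le_mul fun x y => ?_, fun a ha => ?_⟩
  · simpa using hM.prop.2 _ (hF x) _ (hF y)
  · have h := hM.prop.2 _ (hF a) _ (hM.prop.1 ⟨a, ha, rfl⟩)
    simp only [dist_self] at h
    exact dist_le_zero.1 h

end Extension

section Contraction

variable {E : Type u} [MetricSpace E]

/-- With the `ℓ¹` metric the mixed case, between `(x, 0)` and `(y, dist y p)`, is the triangle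
inequality `dist x p ≤ dist x y + dist y p`; the sup metric would not do. -/
theorem lipschitzOnWith_one_collapse_graph_dist (p : E) :
    LipschitzOnWith 1 (fun q : WithLp 1 (E × ℝ) => if q.snd = 0 then q.fst else p)
      {q | q.snd = 0 ∨ q.snd = dist q.fst p} := by
  refine LipschitzOnWith.of_dist_le_mul fun a ha b hb => ?_
  rw [NNReal.coe_one, one_mul, WithLp.prod_dist_eq_add (by simp)]
  simp only [ENNReal.toReal_one, Real.rpow_one, div_one, Real.dist_eq]
  replace ha : a.snd ≠ 0 → a.snd = dist a.fst p := ha.resolve_left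
  replace hb : b.snd ≠ 0 → b.snd = dist b.fst p := hb.resolve_left
  split_ifs with ha0 hb0 hb0
  · simp [ha0, hb0]
  · rw [ha0, hb hb0, zero_sub, abs_neg, abs_of_nonneg dist_nonneg]
    exact dist_triangle _ _ _
  · rw [hb0, ha ha0, sub_zero, abs_of_nonneg dist_nonneg, dist_comm a.fst p, add_comm]
    exact dist_triangle _ _ _
  · simp only [dist_self]
    positivity

theorem IsHyperconvex.exists_lipschitzWith_collapse_graph_dist (hE : IsHyperconvex E) (p : E) :
    ∃ F : WithLp 1 (E × ℝ) → E, LipschitzWith 1 F ∧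
      (∀ x, F (WithLp.toLp 1 (x, 0)) = x) ∧ ∀ x, F (WithLp.toLp 1 (x, dist x p)) = p := by
  obtain ⟨F, hF, hFf⟩ :=
    hE.exists_lipschitzWith_extension (lipschitzOnWith_one_collapse_graph_dist p)
  refine ⟨F, hF, fun x => (hFf (Or.inl rfl)).trans (if_pos rfl), fun x => ?_⟩
  rw [hFf (Or.inr rfl)]
  by_cases hx : dist x p = 0
  · simpa [hx] using dist_eq_zero.1 hx
  · simp [hx]

end Contraction

/-- Every nonempty hyperconvex metric space is contractible. -/
theorem contractible_of_hyperconvex {E : Type u} [MetricSpace E] [Nonempty E]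
    (hyp : ∀ (I : Type u) (x : I → E) (r : I → ℝ), (∀ i, 0 ≤ r i) →
      (∀ i j, dist (x i) (x j) ≤ r i + r j) →
      ∃ c : E, ∀ i, dist (x i) c ≤ r i) :
    ContractibleSpace E := by
  obtain ⟨p⟩ := ‹Nonempty E›
  obtain ⟨F, hF, hF₀, hF₁⟩ := IsHyperconvex.exists_lipschitzWith_collapse_graph_dist hyp p
  rw [contractible_iff_id_nullhomotopic]
  exact ⟨p, ⟨{
    toFun := fun q => F (WithLp.toLp 1 (q.2, q.1 * dist q.2 p))
    continuous_toFun := hF.continuous.comp (by fun_prop)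
    map_zero_left := fun x => by simpa using hF₀ x
    map_one_left := fun x => by simpa using hF₁ x }⟩⟩
end

section
/- Let X be a nonempty compact antipodal metric space, i.e., for every x ∈ X there exists x̄ ∈ X with d(x,x̄) = d(x,y) + d(y,x̄) for all y ∈ X. Then the radius of the tight span satisfies inf_{f∈E(X)} sup_{g∈E(X)} d(f,g) = diam(X)/2; the constant function f₀ ≡ diam(X)/2 belongs to E(X) and satisfies sup_{g∈E(X)} d(f₀,g) = diam(X)/2; and f₀ is the unique center: any f ∈ E(X) with sup_{g∈E(X)} d(f,g) = diam(X)/2 equals f₀. -/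
/-- `Δ(X)`: functions satisfying `f x + f y ≥ d(x, y)`. -/
def DeltaSet (X : Type*) [MetricSpace X] : Set (X → ℝ) :=
  {f | ∀ x y : X, dist x y ≤ f x + f y}

/-- The tight span `E(X)`: pointwise minimal elements of `Δ(X)`. -/
def TightSpan (X : Type*) [MetricSpace X] : Set (X → ℝ) :=
  {f | f ∈ DeltaSet X ∧ ∀ g ∈ DeltaSet X, (∀ x, g x ≤ f x) → g = f}

section Aux

variable {X : Type*} [MetricSpace X]

lemma delta_nonneg {f : X → ℝ} (hf : f ∈ DeltaSet X) (x : X) : 0 ≤ f x := by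
  have := hf x x; simp [dist_self] at this; linarith

variable [Nonempty X] [CompactSpace X]

lemma myDist_le (x y : X) : dist x y ≤ Metric.diam (Set.univ : Set X) :=
  Metric.dist_le_diam_of_mem isCompact_univ.isBounded (Set.mem_univ x) (Set.mem_univ y)

lemma antipode_dist
    {x xb : X} (h : ∀ y : X, dist x xb = dist x y + dist y xb)
    (hant : ∀ x : X, ∃ xb : X, ∀ y : X, dist x xb = dist x y + dist y xb) :
    dist x xb = Metric.diam (Set.univ : Set X) := by
  refine le_antisymm (myDist_le x xb) ?_
  refine Metric.diam_le_of_forall_dist_le dist_nonneg ?_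
  rintro y - z -
  obtain ⟨yb, hy⟩ := hant y
  have h1 := h y
  have h2 := h yb
  have h3 := hy x
  have h4 := hy xb
  have h5 := hy z
  have c1 : dist y x = dist x y := dist_comm y x
  have c2 : dist xb yb = dist yb xb := dist_comm xb yb
  have c3 : (0:ℝ) ≤ dist z yb := dist_nonneg
  linarith

lemma tight_le {f : X → ℝ} (hf : f ∈ TightSpan X) (x₀ : X) :
    f x₀ ≤ Metric.diam (Set.univ : Set X) := by
  classical
  obtain ⟨hΔ, hmin⟩ := hf
  set D := Metric.diam (Set.univ : Set X) with hD
  set s : ℝ := ⨆ y, (dist x₀ y - f y) with hs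
  have hbdd : BddAbove (Set.range fun y : X => dist x₀ y - f y) := by
    refine ⟨f x₀, ?_⟩
    rintro _ ⟨y, rfl⟩
    have := hΔ x₀ y; simp only; linarith
  have hsle : s ≤ f x₀ := ciSup_le fun y => by have := hΔ x₀ y; linarith
  have hsleD : s ≤ D := ciSup_le fun y => by
    have h1 := delta_nonneg hΔ y; have h2 := myDist_le x₀ y; linarith
  set g : X → ℝ := fun y => if y = x₀ then max s 0 else f y with hg
  have hgx : ∀ z, g z = if z = x₀ then max s 0 else f z := fun z => rfl
  have hgΔ : g ∈ DeltaSet X := by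
    intro x y
    by_cases hx : x = x₀ <;> by_cases hy' : y = x₀
    · rw [hgx x, hgx y, if_pos hx, if_pos hy', hx, hy', dist_self]
      positivity
    · have h1 : dist x₀ y - f y ≤ s := le_ciSup hbdd y
      rw [hgx x, hgx y, if_pos hx, if_neg hy', hx]
      have h2 : s ≤ max s 0 := le_max_left s 0
      linarith
    · have h1 : dist x₀ x - f x ≤ s := le_ciSup hbdd x
      rw [hgx x, hgx y, if_neg hx, if_pos hy', hy', dist_comm]
      have h2 : s ≤ max s 0 := le_max_left s 0
      linarith
    · rw [hgx x, hgx y, if_neg hx, if_neg hy']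
      exact hΔ x y
  have hle : ∀ y, g y ≤ f y := by
    intro y
    by_cases hy' : y = x₀
    · rw [hgx y, if_pos hy', hy']
      exact max_le hsle (delta_nonneg hΔ x₀)
    · rw [hgx y, if_neg hy']
  have heq : g = f := hmin g hgΔ hle
  have : f x₀ = max s 0 := by
    rw [← heq, hgx x₀, if_pos rfl]
  rw [this]
  exact max_le hsleD Metric.diam_nonneg

lemma kura_mem (x₀ : X) : (fun y => dist x₀ y) ∈ TightSpan X := by
  constructor
  · intro x y
    calc dist x y ≤ dist x x₀ + dist x₀ y := dist_triangle x x₀ y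
    _ = dist x₀ x + dist x₀ y := by rw [dist_comm]
  · intro g hg hle
    have h0 : g x₀ = 0 := le_antisymm (by simpa [dist_self] using hle x₀) (delta_nonneg hg x₀)
    funext y
    have h1 := hg x₀ y
    have h2 : g y ≤ dist x₀ y := hle y
    show g y = dist x₀ y
    linarith

end Aux

/-- For a nonempty compact antipodal metric space `X`, the radius of the tight span
(with the sup metric) equals `diam X / 2`, the constant function `diam X / 2` belongs
to the tight span, realizes this radius, and is the unique center. -/
theorem tightSpan_radius_of_antipodal {X : Type*} [MetricSpace X] [Nonempty X]
    [CompactSpace X]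
    (hant : ∀ x : X, ∃ xb : X, ∀ y : X, dist x xb = dist x y + dist y xb) :
    (⨅ f : ↥(TightSpan X), ⨆ g : ↥(TightSpan X), ⨆ x : X, |f.1 x - g.1 x|)
        = Metric.diam (Set.univ : Set X) / 2 ∧
    (fun _ : X => Metric.diam (Set.univ : Set X) / 2) ∈ TightSpan X ∧
    (⨆ g : ↥(TightSpan X), ⨆ x : X, |Metric.diam (Set.univ : Set X) / 2 - g.1 x|)
        = Metric.diam (Set.univ : Set X) / 2 ∧
    ∀ f ∈ TightSpan X,
      (⨆ g : ↥(TightSpan X), ⨆ x : X, |f x - g.1 x|)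
          = Metric.diam (Set.univ : Set X) / 2 →
      f = fun _ : X => Metric.diam (Set.univ : Set X) / 2 := by
  classical
  set D := Metric.diam (Set.univ : Set X) with hD
  have hD0 : (0:ℝ) ≤ D := Metric.diam_nonneg
  obtain ⟨x₀⟩ := ‹Nonempty X›
  haveI hne : Nonempty ↥(TightSpan X) := ⟨⟨_, kura_mem x₀⟩⟩
  -- uniform bound on |f x - g x|
  have habs : ∀ f ∈ TightSpan X, ∀ g ∈ TightSpan X, ∀ x : X, |f x - g x| ≤ D := by
    intro f hf g hg x
    have h1 := delta_nonneg hf.1 x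
    have h2 := delta_nonneg hg.1 x
    have h3 := tight_le hf x
    have h4 := tight_le hg x
    rw [abs_le]; constructor <;> linarith
  have hbddIn : ∀ f ∈ TightSpan X, ∀ g ∈ TightSpan X,
      BddAbove (Set.range fun x : X => |f x - g x|) := by
    intro f hf g hg
    exact ⟨D, by rintro _ ⟨x, rfl⟩; exact habs f hf g hg x⟩
  have hInLe : ∀ f ∈ TightSpan X, ∀ g ∈ TightSpan X,
      (⨆ x : X, |f x - g x|) ≤ D := by
    intro f hf g hg
    exact ciSup_le fun x => habs f hf g hg x
  have hbddOut : ∀ f ∈ TightSpan X,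
      BddAbove (Set.range fun g : ↥(TightSpan X) => ⨆ x : X, |f x - g.1 x|) := by
    intro f hf
    exact ⟨D, by rintro _ ⟨g, rfl⟩; exact hInLe f hf g.1 g.2⟩
  -- R f ≥ f y for every y
  have hRge : ∀ f ∈ TightSpan X, ∀ y : X,
      f y ≤ ⨆ g : ↥(TightSpan X), ⨆ x : X, |f x - g.1 x| := by
    intro f hf y
    have hk : (fun z => dist y z) ∈ TightSpan X := kura_mem y
    have h1 : |f y - dist y y| ≤ ⨆ x : X, |f x - dist y x| :=
      le_ciSup (hbddIn f hf _ hk) y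
    have h2 : (⨆ x : X, |f x - dist y x|) ≤
        ⨆ g : ↥(TightSpan X), ⨆ x : X, |f x - g.1 x| :=
      le_ciSup (hbddOut f hf) (⟨_, hk⟩ : ↥(TightSpan X))
    have h3 : |f y - dist y y| = f y := by
      rw [dist_self, sub_zero, abs_of_nonneg (delta_nonneg hf.1 y)]
    linarith
  -- the constant D/2 is in the tight span
  have hconst : (fun _ : X => D / 2) ∈ TightSpan X := by
    constructor
    · intro x y
      have := myDist_le x y; linarith
    · intro g hg hle
      funext y
      obtain ⟨yb, hy⟩ := hant y
      have hdy : dist y yb = D := antipode_dist hy hant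
      have h1 := hg y yb
      have h2 : g yb ≤ D / 2 := hle yb
      have h3 : g y ≤ D / 2 := hle y
      show g y = D / 2
      linarith
  -- R f ≥ D/2 for every f in the tight span
  have hRgehalf : ∀ f ∈ TightSpan X,
      D / 2 ≤ ⨆ g : ↥(TightSpan X), ⨆ x : X, |f x - g.1 x| := by
    intro f hf
    obtain ⟨xb, hx⟩ := hant x₀
    have hdx : dist x₀ xb = D := antipode_dist hx hant
    have h1 := hf.1 x₀ xb
    have h2 := hRge f hf x₀
    have h3 := hRge f hf xb
    linarith
  -- R f₀ = D/2
  have hRconst :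
      (⨆ g : ↥(TightSpan X), ⨆ x : X, |D / 2 - g.1 x|) = D / 2 := by
    refine le_antisymm ?_ (hRgehalf _ hconst)
    refine ciSup_le fun g => ciSup_le fun x => ?_
    have h1 := delta_nonneg g.2.1 x
    have h2 := tight_le g.2 x
    rw [abs_le]; constructor <;> linarith
  refine ⟨?_, hconst, hRconst, ?_⟩
  · -- the infimum
    refine le_antisymm ?_ (le_ciInf fun f => hRgehalf f.1 f.2)
    have hbb : BddBelow (Set.range fun f : ↥(TightSpan X) =>
        ⨆ g : ↥(TightSpan X), ⨆ x : X, |f.1 x - g.1 x|) := by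
      refine ⟨D / 2, ?_⟩
      rintro _ ⟨f, rfl⟩
      exact hRgehalf f.1 f.2
    have := ciInf_le hbb (⟨_, hconst⟩ : ↥(TightSpan X))
    calc (⨅ f : ↥(TightSpan X), ⨆ g : ↥(TightSpan X), ⨆ x : X, |f.1 x - g.1 x|)
        ≤ ⨆ g : ↥(TightSpan X), ⨆ x : X, |D / 2 - g.1 x| := this
      _ = D / 2 := hRconst
  · -- uniqueness
    intro f hf hR
    funext y
    obtain ⟨yb, hy⟩ := hant y
    have hdy : dist y yb = D := antipode_dist hy hant
    have h1 := hf.1 y yb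
    have h2 : f y ≤ D / 2 := by have := hRge f hf y; rw [hR] at this; exact this
    have h3 : f yb ≤ D / 2 := by have := hRge f hf yb; rw [hR] at this; exact this
    show f y = D / 2
    linarith
end

section
/- F(S¹) is isometric to E(S¹). Explicitly, the map sending f ∈ F(S¹) to f̃ : S¹ → ℝ, defined by f̃(θ) = f(θ) for θ ∈ [0,π] and f̃(θ) = π − f(θ−π) for θ ∈ (π,2π), is a well-defined surjective isometry from F(S¹) onto E(S¹). -/
noncomputable section

/-- The circle `ℝ/2πℤ` with the quotient metric (geodesic metric, circumference `2π`). -/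
abbrev S1 : Type := AddCircle (2 * Real.pi)

instance : Fact (0 < 2 * Real.pi) := ⟨by positivity⟩

/-- The tight span of `S¹`: 1-Lipschitz functions with `f θ + f (θ + π) = π`. -/
def ES1 : Set (S1 → ℝ) :=
  {f | LipschitzWith 1 f ∧ ∀ θ : S1, f θ + f (θ + ((Real.pi : ℝ) : S1)) = Real.pi}

/-- The reduced tight span `F(S¹)`: 1-Lipschitz functions on `[0, π]`
with `f 0 + f π = π`. -/
def FS1 : Set (Set.Icc (0 : ℝ) Real.pi → ℝ) :=
  {f | LipschitzWith 1 f ∧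
    f ⟨0, Set.left_mem_Icc.2 Real.pi_pos.le⟩ +
      f ⟨Real.pi, Set.right_mem_Icc.2 Real.pi_pos.le⟩ = Real.pi}

/-- The extension `f̃` of `f : [0,π] → ℝ` to `S¹`, given by `f̃ θ = f θ` for `θ ∈ [0,π]`
and `f̃ θ = π − f (θ − π)` for `θ ∈ (π, 2π)`. -/
def tilde (f : Set.Icc (0 : ℝ) Real.pi → ℝ) : S1 → ℝ := fun θ =>
  let u := AddCircle.equivIco (2 * Real.pi) 0 θ
  if h : (u : ℝ) ≤ Real.pi then f ⟨(u : ℝ), u.2.1, h⟩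
  else Real.pi - f ⟨(u : ℝ) - Real.pi, by
    have h1 : Real.pi < (u : ℝ) := not_le.mp h
    have h2 : (u : ℝ) < 0 + 2 * Real.pi := u.2.2
    constructor <;> [linarith; linarith]⟩

/-!
An antipodal function `g` on the circle satisfies `g (x + π) = π - g x`, so it is determined by
its values on `[0, π]`, and `f ↦ f̃` and restriction to `[0, π]` are mutually inverse.
A function on `ℝ/pℤ` is `K`-Lipschitz as soon as its pull-back to `ℝ` is `K`-Lipschitz on
`[0, p]`: the long way round between two points is controlled through `0 ≡ p`. For an antipodal
function the bound on `[π, 2π]` is the bound on `[0, π]` translated by `π`. Finally `|f̃ - g̃|`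
takes the same value at `x + π` as at `x`, so both suprema run over the same set.
-/

open Set Real

section Lipschitz

variable {α : Type*} [PseudoMetricSpace α] {K : NNReal}

theorem LipschitzOnWith.Icc_union_Icc {f : ℝ → α} {a b c : ℝ}
    (hab : LipschitzOnWith K f (Icc a b)) (hbc : LipschitzOnWith K f (Icc b c)) :
    LipschitzOnWith K f (Icc a b ∪ Icc b c) := by
  have cross : ∀ x ∈ Icc a b, ∀ y ∈ Icc b c, dist (f x) (f y) ≤ K * dist x y := by
    intro x hx y hy
    have hb₁ : b ∈ Icc a b := ⟨hx.1.trans hx.2, le_rfl⟩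
    have hb₂ : b ∈ Icc b c := ⟨le_rfl, hy.1.trans hy.2⟩
    calc dist (f x) (f y) ≤ dist (f x) (f b) + dist (f b) (f y) := dist_triangle _ _ _
      _ ≤ K * dist x b + K * dist b y :=
        add_le_add (hab.dist_le_mul x hx b hb₁) (hbc.dist_le_mul b hb₂ y hy)
      _ = K * dist x y := by
        rw [Real.dist_eq, Real.dist_eq, Real.dist_eq, abs_of_nonpos (by linarith [hx.2]),
          abs_of_nonpos (by linarith [hy.1]), abs_of_nonpos (by linarith [hx.2, hy.1])]
        ring
  refine LipschitzOnWith.of_dist_le_mul fun x hx y hy => ?_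
  rcases hx with hx | hx <;> rcases hy with hy | hy
  · exact hab.dist_le_mul x hx y hy
  · exact cross x hx y hy
  · rw [dist_comm, dist_comm x]
    exact cross y hy x hx
  · exact hbc.dist_le_mul x hx y hy

namespace AddCircle

variable {p : ℝ}

theorem lipschitzWith_coe : LipschitzWith 1 ((↑) : ℝ → AddCircle p) :=
  LipschitzWith.mk_one fun x y => by
    rw [dist_eq_norm, dist_eq_norm, ← coe_sub]
    exact QuotientAddGroup.norm_mk_le_norm

variable [Fact (0 < p)]

theorem norm_coe_eq_min {d : ℝ} (hd : d ∈ Icc 0 p) :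
    ‖(d : AddCircle p)‖ = min d (p - d) := by
  have hp : 0 < p := Fact.out
  rcases le_or_gt d (p / 2) with h | h
  · rw [min_eq_left (by linarith), (norm_coe_eq_abs_iff p hp.ne').2, abs_of_nonneg hd.1]
    rwa [abs_of_nonneg hd.1, abs_of_pos hp]
  · have hshift : ((d - p : ℝ) : AddCircle p) = d := by
      rw [coe_sub, coe_period, sub_zero]
    rw [min_eq_right (by linarith), ← hshift, (norm_coe_eq_abs_iff p hp.ne').2,
      abs_of_nonpos (by linarith [hd.2])]
    · ring
    · rw [abs_of_nonpos (by linarith [hd.2]), abs_of_pos hp]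
      linarith

theorem lipschitzWith_of_lipschitzOnWith_Icc {g : AddCircle p → α}
    (hg : LipschitzOnWith K (fun x : ℝ => g x) (Icc 0 p)) : LipschitzWith K g := by
  have hp : 0 < p := Fact.out
  have hsurj (θ : AddCircle p) : ∃ x ∈ Ico 0 p, (x : AddCircle p) = θ := by
    simpa using (coe_image_Ico_eq p (0 : ℝ)).ge (mem_univ θ)
  refine LipschitzWith.of_dist_le_mul fun θ θ' => ?_
  obtain ⟨a, ha, rfl⟩ := hsurj θ
  obtain ⟨b, hb, rfl⟩ := hsurj θ'
  wlog hba : b ≤ a generalizing a b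
  · rw [dist_comm, dist_comm (a : AddCircle p)]
    exact this b hb a ha (le_of_not_ge hba)
  have ha' : a ∈ Icc 0 p := Ico_subset_Icc_self ha
  have hb' : b ∈ Icc 0 p := Ico_subset_Icc_self hb
  have hdist : dist (a : AddCircle p) b = min (a - b) (p - (a - b)) := by
    rw [dist_eq_norm, ← coe_sub, norm_coe_eq_min ⟨by linarith, by linarith [ha.2, hb.1]⟩]
  have hshort : dist (g a) (g b) ≤ K * (a - b) := by
    simpa [Real.dist_eq, abs_of_nonneg (sub_nonneg.2 hba)] using hg.dist_le_mul a ha' b hb'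
  have hlong : dist (g a) (g b) ≤ K * (p - (a - b)) := calc
    dist (g a) (g b) ≤ dist (g a) (g (p : AddCircle p)) + dist (g (0 : ℝ)) (g b) := by
      rw [coe_period, QuotientAddGroup.mk_zero]
      exact dist_triangle _ _ _
    _ ≤ K * dist a p + K * dist (0 : ℝ) b :=
      add_le_add (hg.dist_le_mul a ha' p ⟨hp.le, le_rfl⟩) (hg.dist_le_mul 0 ⟨le_rfl, hp.le⟩ b hb')
    _ = K * (p - (a - b)) := by
      rw [Real.dist_eq, Real.dist_eq, abs_of_nonpos (by linarith [ha.2]),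
        abs_of_nonpos (by linarith [hb.1])]
      ring
  rw [hdist, mul_min_of_nonneg _ _ K.coe_nonneg]
  exact le_min hshort hlong

end AddCircle

end Lipschitz

theorem S1.exists_mem_Icc_eq_coe_or_eq_coe_add_pi (θ : S1) :
    ∃ x ∈ Icc 0 π, θ = x ∨ θ = (x : S1) + π := by
  obtain ⟨y, hy, rfl⟩ : θ ∈ ((↑) : ℝ → S1) '' Ico 0 (0 + 2 * π) := by
    rw [AddCircle.coe_image_Ico_eq]; trivial
  rcases le_or_gt y π with h | h
  · exact ⟨y, ⟨hy.1, h⟩, Or.inl rfl⟩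
  · refine ⟨y - π, ⟨by linarith, by linarith [hy.2]⟩, Or.inr ?_⟩
    rw [← AddCircle.coe_add, sub_add_cancel]

theorem mem_ES1_of_lipschitzOnWith {g : S1 → ℝ} (hanti : ∀ θ : S1, g θ + g (θ + π) = π)
    (hg : LipschitzOnWith 1 (fun x : ℝ => g x) (Icc 0 π)) : g ∈ ES1 := by
  have hshift (x : ℝ) : g x = π - g ↑(x - π) := by
    have := hanti ↑(x - π)
    rw [← AddCircle.coe_add, sub_add_cancel] at this
    linarith
  have hg' : LipschitzOnWith 1 (fun x : ℝ => g x) (Icc π (2 * π)) :=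
    LipschitzOnWith.of_dist_le_mul fun x hx y hy => by
      rw [hshift x, hshift y, dist_sub_left, ← dist_sub_right x y π]
      exact hg.dist_le_mul _ ⟨by linarith [hx.1], by linarith [hx.2]⟩
        _ ⟨by linarith [hy.1], by linarith [hy.2]⟩
  have hglued := hg.Icc_union_Icc hg'
  rw [Icc_union_Icc_eq_Icc pi_pos.le (by linarith [pi_pos])] at hglued
  exact ⟨AddCircle.lipschitzWith_of_lipschitzOnWith_Icc hglued, hanti⟩

theorem tilde_coe (f : Icc 0 π → ℝ) {x : ℝ} (hx : x ∈ Icc 0 π) : tilde f x = f ⟨x, hx⟩ := by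
  have hx' : x ∈ Ico 0 (0 + 2 * π) := ⟨hx.1, by linarith [hx.2, pi_pos]⟩
  simp only [tilde, AddCircle.equivIco_coe_eq hx', dif_pos hx.2]

theorem tilde_coe_add_pi {f : Icc 0 π → ℝ} (hf : f ∈ FS1) {x : ℝ} (hx : x ∈ Icc 0 π) :
    tilde f (x + π) = π - f ⟨x, hx⟩ := by
  -- at the endpoints the two branches of `tilde` are matched by `f 0 + f π = π`
  have hsum := hf.2
  rcases hx.1.eq_or_lt with rfl | hx₀
  · rw [QuotientAddGroup.mk_zero, zero_add, tilde_coe f (right_mem_Icc.2 pi_pos.le)]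
    linarith
  rcases hx.2.eq_or_lt with rfl | hxπ
  · rw [← AddCircle.coe_add, ← two_mul, AddCircle.coe_period, ← QuotientAddGroup.mk_zero,
      tilde_coe f (left_mem_Icc.2 pi_pos.le)]
    linarith
  have hy : x + π ∈ Ico 0 (0 + 2 * π) := ⟨by linarith, by linarith⟩
  simp only [tilde, ← AddCircle.coe_add, AddCircle.equivIco_coe_eq hy,
    dif_neg (show ¬ x + π ≤ π by linarith), add_sub_cancel_right]

theorem tilde_add_tilde_add_pi {f : Icc 0 π → ℝ} (hf : f ∈ FS1) (θ : S1) :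
    tilde f θ + tilde f (θ + π) = π := by
  obtain ⟨x, hx, rfl | rfl⟩ := S1.exists_mem_Icc_eq_coe_or_eq_coe_add_pi θ
  · rw [tilde_coe_add_pi hf hx, tilde_coe f hx]
    ring
  · rw [add_assoc, ← AddCircle.coe_add (p := 2 * π) π π, ← two_mul, AddCircle.coe_period,
      add_zero, tilde_coe_add_pi hf hx, tilde_coe f hx]
    ring

theorem tilde_mem_ES1 {f : Icc 0 π → ℝ} (hf : f ∈ FS1) : tilde f ∈ ES1 := by
  refine mem_ES1_of_lipschitzOnWith (tilde_add_tilde_add_pi hf) ?_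
  refine LipschitzOnWith.of_dist_le_mul fun x hx y hy => ?_
  rw [tilde_coe f hx, tilde_coe f hy]
  exact hf.1.dist_le_mul ⟨x, hx⟩ ⟨y, hy⟩

theorem range_abs_tilde_sub_tilde {f g : Icc 0 π → ℝ} (hf : f ∈ FS1) (hg : g ∈ FS1) :
    range (fun θ => |tilde f θ - tilde g θ|) = range fun x => |f x - g x| := by
  refine Subset.antisymm ?_ ?_
  · rintro - ⟨θ, rfl⟩
    obtain ⟨x, hx, rfl | rfl⟩ := S1.exists_mem_Icc_eq_coe_or_eq_coe_add_pi θ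
    · exact ⟨⟨x, hx⟩, by simp only [tilde_coe _ hx]⟩
    · refine ⟨⟨x, hx⟩, ?_⟩
      simp only [tilde_coe_add_pi hf hx, tilde_coe_add_pi hg hx, sub_sub_sub_cancel_left,
        abs_sub_comm]
  · rintro - ⟨x, rfl⟩
    exact ⟨x, by simp only [tilde_coe _ x.2]⟩

theorem restrict_mem_FS1 {g : S1 → ℝ} (hg : g ∈ ES1) : (fun x : Icc 0 π => g x) ∈ FS1 :=
  ⟨(hg.1.comp (AddCircle.lipschitzWith_coe.comp (LipschitzWith.subtype_val _))).weaken (by simp),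
    by simpa using hg.2 0⟩

theorem tilde_restrict {g : S1 → ℝ} (hg : g ∈ ES1) : tilde (fun x : Icc 0 π => g x) = g := by
  funext θ
  obtain ⟨x, hx, rfl | rfl⟩ := S1.exists_mem_Icc_eq_coe_or_eq_coe_add_pi θ
  · exact tilde_coe _ hx
  · rw [tilde_coe_add_pi (restrict_mem_FS1 hg) hx]
    linarith [hg.2 x]

/-- `F(S¹)` is isometric to `E(S¹)` via `f ↦ f̃`: the map is well defined,
surjective onto `E(S¹)`, and preserves sup distances. -/
theorem FS1_isometric_ES1 :
    (∀ f ∈ FS1, tilde f ∈ ES1) ∧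
    (∀ g ∈ ES1, ∃ f ∈ FS1, tilde f = g) ∧
    (∀ f ∈ FS1, ∀ g ∈ FS1,
      (⨆ θ : S1, |tilde f θ - tilde g θ|) = ⨆ x : Set.Icc (0 : ℝ) Real.pi, |f x - g x|) :=
  ⟨fun _ hf => tilde_mem_ES1 hf,
    fun g hg => ⟨_, restrict_mem_FS1 hg, tilde_restrict hg⟩,
    fun _ hf _ hg => by rw [← sSup_range, ← sSup_range, range_abs_tilde_sub_tilde hf hg]⟩

end
end

section
/- The open (π/2)-neighborhood B_{π/2}(S¹, E(S¹)) = {f ∈ E(S¹) : ∃ θ ∈ S¹, f(θ) < π/2} of the Kuratowski image of S¹ in E(S¹), equipped with the subspace topology inherited from E(S¹), is contractible. -/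
noncomputable section

/-- The open `r`-neighborhood `B_r(S¹, E(S¹))` of the Kuratowski image of `S¹` in the
tight span `E(S¹) = {f : 1-Lipschitz, f θ + f (θ+π) = π} ⊆ C(S¹, ℝ)` (sup metric). -/
def nbhd (r : ℝ) : Set C(S1, ℝ) :=
  {f | (LipschitzWith 1 ⇑f ∧ ∀ θ : S1, f θ + f (θ + ((Real.pi : ℝ) : S1)) = Real.pi) ∧
    ∃ θ : S1, f θ < r}

namespace NbhdAux

def pp : S1 := ((Real.pi : ℝ) : S1)

lemma two_pi_ne : (2 * Real.pi) ≠ 0 := by positivity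

lemma coe_two_pi : ((2 * Real.pi : ℝ) : S1) = 0 := AddCircle.coe_period _

lemma pp_add_pp : pp + pp = 0 := by
  rw [pp, ← AddCircle.coe_add, show Real.pi + Real.pi = 2 * Real.pi by ring]
  exact coe_two_pi

lemma neg_pp : -pp = pp := neg_eq_of_add_eq_zero_left pp_add_pp

lemma norm_eq_abs_of {x : ℝ} (hx : |x| ≤ Real.pi) : ‖(x : S1)‖ = |x| := by
  rw [AddCircle.norm_coe_eq_abs_iff _ two_pi_ne]
  rw [abs_of_pos (by positivity : (0:ℝ) < 2 * Real.pi)]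
  linarith

lemma norm_sub_pi {x : ℝ} (hx : |x| ≤ Real.pi) :
    ‖((x - Real.pi : ℝ) : S1)‖ = Real.pi - |x| := by
  have habs := abs_le.mp hx
  rcases le_or_gt 0 x with h | h
  · rw [norm_eq_abs_of (by rw [abs_of_nonpos (by linarith)]; linarith)]
    rw [abs_of_nonpos (by linarith), abs_of_nonneg h]; ring
  · have hc : ((x - Real.pi : ℝ) : S1) = ((x + Real.pi : ℝ) : S1) := by
      rw [show (x + Real.pi : ℝ) = (x - Real.pi) + 2 * Real.pi by ring, AddCircle.coe_add,
        coe_two_pi, add_zero]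
    rw [hc, norm_eq_abs_of (by rw [abs_of_nonneg (by linarith)]; linarith)]
    rw [abs_of_nonneg (by linarith), abs_of_neg h]; ring

lemma dist_apt (θ : S1) : dist θ 0 + dist θ pp = Real.pi := by
  obtain ⟨x, rfl⟩ := QuotientAddGroup.mk_surjective θ
  have key : ∀ y : ℝ, |y| ≤ Real.pi →
      dist ((y : ℝ) : S1) 0 + dist ((y : ℝ) : S1) pp = Real.pi := by
    intro y hy
    have e0 : dist ((y : ℝ) : S1) 0 = |y| := by
      rw [dist_eq_norm, sub_zero, norm_eq_abs_of hy]
    have e1 : dist ((y : ℝ) : S1) pp = Real.pi - |y| := by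
      rw [dist_eq_norm, pp, ← AddCircle.coe_sub, norm_sub_pi hy]
    rw [e0, e1]; ring
  have hcoe : ((x : ℝ) : S1) = (((x - (round ((2 * Real.pi)⁻¹ * x) : ℝ) * (2 * Real.pi)) : ℝ) : S1) := by
    rw [AddCircle.coe_sub]
    have h0 : (((round ((2 * Real.pi)⁻¹ * x) : ℝ) * (2 * Real.pi) : ℝ) : S1) = 0 := by
      rw [AddCircle.coe_eq_zero_iff]
      exact ⟨round ((2 * Real.pi)⁻¹ * x), by rw [zsmul_eq_mul]⟩
    rw [h0, sub_zero]
  have hyabs : |x - (round ((2 * Real.pi)⁻¹ * x) : ℝ) * (2 * Real.pi)| ≤ Real.pi := by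
    have h1 : ‖((x : ℝ) : S1)‖ = |x - (round ((2 * Real.pi)⁻¹ * x) : ℝ) * (2 * Real.pi)| :=
      AddCircle.norm_eq _
    have h2 := AddCircle.norm_le_half_period (p := 2 * Real.pi) (x := ((x : ℝ) : S1)) two_pi_ne
    rw [h1, abs_of_pos (by positivity : (0:ℝ) < 2 * Real.pi)] at h2
    linarith
  rw [hcoe]
  exact key _ hyabs

lemma dist_add_pp_zero (θ : S1) : dist (θ + pp) 0 = dist θ pp := by
  rw [dist_eq_norm, sub_zero, dist_eq_norm, show θ - pp = θ + pp - (pp + pp) by abel,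
    pp_add_pp, sub_zero]

lemma dist_add_pp_pp (θ : S1) : dist (θ + pp) pp = dist θ 0 := by
  rw [dist_eq_norm, add_sub_cancel_right, dist_eq_norm, sub_zero]

lemma dist_zero_pp : dist (0 : S1) pp = Real.pi := by
  have := dist_apt (0 : S1)
  simpa using this

lemma dist_pp_zero : dist pp (0 : S1) = Real.pi := by
  rw [dist_comm]; exact dist_zero_pp

lemma dist_self_antipode (θ : S1) : dist θ (θ + pp) = Real.pi := by
  rw [dist_eq_norm, show θ - (θ + pp) = -pp by abel, neg_pp, ← sub_zero pp, ← dist_eq_norm]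
  exact dist_pp_zero

end NbhdAux

-- appended after part1 content (namespace NbhdAux reopened)
namespace NbhdAux

/-! ### Lipschitz helpers -/

lemma lip1_const_sub {α : Type*} [PseudoMetricSpace α] {f : α → ℝ}
    (h : LipschitzWith 1 f) (a : ℝ) : LipschitzWith 1 fun x => a - f x := by
  apply LipschitzWith.of_dist_le_mul
  intro x y
  have := h.dist_le_mul x y
  simp only [Real.dist_eq, NNReal.coe_one, one_mul] at this ⊢
  rw [show a - f x - (a - f y) = -(f x - f y) by ring, abs_neg]
  exact this

lemma lip1_const_add {α : Type*} [PseudoMetricSpace α] {f : α → ℝ}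
    (h : LipschitzWith 1 f) (a : ℝ) : LipschitzWith 1 fun x => a + f x := by
  apply LipschitzWith.of_dist_le_mul
  intro x y
  have := h.dist_le_mul x y
  simp only [Real.dist_eq, NNReal.coe_one, one_mul] at this ⊢
  rw [show a + f x - (a + f y) = f x - f y by ring]
  exact this

lemma lip1_combo {α : Type*} [PseudoMetricSpace α] {f g : α → ℝ}
    (hf : LipschitzWith 1 f) (hg : LipschitzWith 1 g) {t : ℝ} (h0 : 0 ≤ t) (h1 : t ≤ 1) :
    LipschitzWith 1 fun x => (1 - t) * f x + t * g x := by
  apply LipschitzWith.of_dist_le_mul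
  intro x y
  have hfd := hf.dist_le_mul x y
  have hgd := hg.dist_le_mul x y
  simp only [Real.dist_eq, NNReal.coe_one, one_mul] at hfd hgd ⊢
  calc |(1 - t) * f x + t * g x - ((1 - t) * f y + t * g y)|
      = |(1 - t) * (f x - f y) + t * (g x - g y)| := by ring_nf
    _ ≤ |(1 - t) * (f x - f y)| + |t * (g x - g y)| := abs_add_le _ _
    _ = (1 - t) * |f x - f y| + t * |g x - g y| := by
        rw [abs_mul, abs_mul, abs_of_nonneg (by linarith : (0:ℝ) ≤ 1 - t), abs_of_nonneg h0]
    _ ≤ (1 - t) * dist x y + t * dist x y := by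
        have hd := dist_nonneg (x := x) (y := y)
        have h1t : (0:ℝ) ≤ 1 - t := by linarith
        gcongr
    _ = dist x y := by ring

lemma lip1_max {α : Type*} [PseudoMetricSpace α] {f g : α → ℝ}
    (hf : LipschitzWith 1 f) (hg : LipschitzWith 1 g) :
    LipschitzWith 1 fun x => max (f x) (g x) := by
  have := hf.max hg
  rwa [max_self] at this

lemma lip1_min {α : Type*} [PseudoMetricSpace α] {f g : α → ℝ}
    (hf : LipschitzWith 1 f) (hg : LipschitzWith 1 g) :
    LipschitzWith 1 fun x => min (f x) (g x) := by
  have := hf.min hg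
  rwa [max_self] at this

/-! ### The clamp construction -/

def aa (s : ℝ) (θ : S1) : ℝ := max (s - dist θ 0) ((Real.pi - s) - dist θ pp)

def bb (s : ℝ) (θ : S1) : ℝ := min (s + dist θ 0) ((Real.pi - s) + dist θ pp)

def cl (s : ℝ) (f : S1 → ℝ) (θ : S1) : ℝ := max (aa s θ) (min (f θ) (bb s θ))

lemma lip_dist0 : LipschitzWith 1 fun θ : S1 => dist θ 0 := LipschitzWith.dist_left 0

lemma lip_distpp : LipschitzWith 1 fun θ : S1 => dist θ pp := LipschitzWith.dist_left pp

lemma lip_aa (s : ℝ) : LipschitzWith 1 (aa s) :=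
  lip1_max (lip1_const_sub lip_dist0 s) (lip1_const_sub lip_distpp (Real.pi - s))

lemma lip_bb (s : ℝ) : LipschitzWith 1 (bb s) :=
  lip1_min (lip1_const_add lip_dist0 s) (lip1_const_add lip_distpp (Real.pi - s))

lemma lip_cl (s : ℝ) {f : S1 → ℝ} (hf : LipschitzWith 1 f) : LipschitzWith 1 (cl s f) :=
  lip1_max (lip_aa s) (lip1_min hf (lip_bb s))

lemma aa_le_bb {s : ℝ} (h0 : 0 ≤ s) (h1 : s ≤ Real.pi) (θ : S1) : aa s θ ≤ bb s θ := by
  have h := dist_apt θ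
  have d0 := dist_nonneg (x := θ) (y := (0 : S1))
  have d1 := dist_nonneg (x := θ) (y := pp)
  unfold aa bb
  refine max_le (le_min ?_ ?_) (le_min ?_ ?_) <;> linarith

lemma aa_apt (s : ℝ) (θ : S1) : aa s (θ + pp) = Real.pi - bb s θ := by
  unfold aa bb
  rw [dist_add_pp_zero, dist_add_pp_pp, ← max_sub_sub_left, max_comm]
  congr 1 <;> ring

lemma bb_apt (s : ℝ) (θ : S1) : bb s (θ + pp) = Real.pi - aa s θ := by
  unfold aa bb
  rw [dist_add_pp_zero, dist_add_pp_pp, ← min_sub_sub_left, min_comm]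
  congr 1 <;> ring

lemma clamp_comm {a b x : ℝ} (h : a ≤ b) : max a (min x b) = min b (max x a) := by
  rw [max_min_distrib_left, max_eq_right h, max_comm, min_comm]

lemma cl_apt {s : ℝ} (h0 : 0 ≤ s) (h1 : s ≤ Real.pi) {f : S1 → ℝ}
    (hA : ∀ θ : S1, f θ + f (θ + pp) = Real.pi) (θ : S1) :
    cl s f (θ + pp) = Real.pi - cl s f θ := by
  have hfθ : f (θ + pp) = Real.pi - f θ := by have := hA θ; linarith
  unfold cl
  rw [aa_apt, bb_apt, hfθ, min_sub_sub_left, max_sub_sub_left, clamp_comm (aa_le_bb h0 h1 θ)]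
end NbhdAux

namespace NbhdAux

lemma dist_zero_zero : dist (0 : S1) (0 : S1) = 0 := dist_self 0

lemma cl_zero {s : ℝ} (h0 : 0 ≤ s) (h1 : s ≤ Real.pi) (f : S1 → ℝ) : cl s f 0 = s := by
  have haa : aa s 0 = s := by
    unfold aa
    rw [dist_zero_zero, dist_zero_pp]
    rw [sub_zero, show Real.pi - s - Real.pi = -s by ring]
    exact max_eq_left (by linarith)
  have hbb : bb s 0 = s := by
    unfold bb
    rw [dist_zero_zero, dist_zero_pp]
    rw [add_zero]
    exact min_eq_left (by linarith)
  unfold cl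
  rw [haa, hbb]
  exact max_eq_left (min_le_right _ _)

lemma f_pp {f : S1 → ℝ} (hA : ∀ θ : S1, f θ + f (θ + pp) = Real.pi) :
    f pp = Real.pi - f 0 := by
  have := hA 0
  rw [zero_add] at this
  linarith

lemma abs_sub_le_dist_of_lip {f : S1 → ℝ} (hL : LipschitzWith 1 f) (θ ψ : S1) :
    |f θ - f ψ| ≤ dist θ ψ := by
  have := hL.dist_le_mul θ ψ
  simpa [Real.dist_eq] using this

lemma f_bounds {f : S1 → ℝ} (hL : LipschitzWith 1 f)
    (hA : ∀ θ : S1, f θ + f (θ + pp) = Real.pi) (θ : S1) :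
    0 ≤ f θ ∧ f θ ≤ Real.pi := by
  have h1 := abs_sub_le_dist_of_lip hL θ (θ + pp)
  rw [dist_self_antipode] at h1
  have h2 := hA θ
  have h3 := abs_le.mp h1
  constructor <;> [linarith [h3.2]; linarith [h3.1]]

lemma cl_eq_self {f : S1 → ℝ} (hL : LipschitzWith 1 f)
    (hA : ∀ θ : S1, f θ + f (θ + pp) = Real.pi) (θ : S1) : cl (f 0) f θ = f θ := by
  have h0 := abs_le.mp (abs_sub_le_dist_of_lip hL θ 0)
  have h1 := abs_le.mp (abs_sub_le_dist_of_lip hL θ pp)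
  have h2 := f_pp hA
  have haa : aa (f 0) θ ≤ f θ := by
    unfold aa
    exact max_le (by linarith [h0.1]) (by linarith [h1.1])
  have hbb : f θ ≤ bb (f 0) θ := by
    unfold bb
    exact le_min (by linarith [h0.2]) (by linarith [h1.2])
  unfold cl
  rw [min_eq_left hbb, max_eq_right haa]

/-- If the clamp of `f` is constantly `π/2`, then `f` is constantly `π/2`. -/
lemma cl_forces {s : ℝ} (h0 : 0 ≤ s) (h1 : s ≤ Real.pi) {f : S1 → ℝ}
    (hL : LipschitzWith 1 f) (hA : ∀ θ : S1, f θ + f (θ + pp) = Real.pi)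
    (hall : ∀ θ : S1, cl s f θ = Real.pi / 2) (θ : S1) : f θ = Real.pi / 2 := by
  have hs : s = Real.pi / 2 := by rw [← cl_zero h0 h1 f, hall 0]
  subst hs
  -- at points distinct from 0 and pp, f equals π/2
  have key : ∀ ψ : S1, ψ ≠ 0 → ψ ≠ pp → f ψ = Real.pi / 2 := by
    intro ψ hψ0 hψp
    have hd0 : 0 < dist ψ (0 : S1) := dist_pos.mpr hψ0
    have hdp : 0 < dist ψ pp := dist_pos.mpr hψp
    have haa : aa (Real.pi / 2) ψ < Real.pi / 2 := by
      unfold aa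
      rw [show Real.pi - Real.pi / 2 = Real.pi / 2 by ring]
      exact max_lt (by linarith) (by linarith)
    have hbb : Real.pi / 2 < bb (Real.pi / 2) ψ := by
      unfold bb
      rw [show Real.pi - Real.pi / 2 = Real.pi / 2 by ring]
      exact lt_min (by linarith) (by linarith)
    have hcl := hall ψ
    unfold cl at hcl
    have hmin : min (f ψ) (bb (Real.pi / 2) ψ) = Real.pi / 2 := by
      rcases le_total (min (f ψ) (bb (Real.pi / 2) ψ)) (aa (Real.pi / 2) ψ) with h | h
      · rw [max_eq_left h] at hcl; linarith
      · rw [max_eq_right h] at hcl; exact hcl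
    rcases le_total (f ψ) (bb (Real.pi / 2) ψ) with h | h
    · rw [min_eq_left h] at hmin; exact hmin
    · rw [min_eq_right h] at hmin; linarith
  -- value at 0
  have h0' : f 0 = Real.pi / 2 := by
    by_contra hne
    have hc : 0 < |f 0 - Real.pi / 2| := abs_pos.mpr (sub_ne_zero.mpr hne)
    set ε : ℝ := min (|f 0 - Real.pi / 2| / 2) (Real.pi / 2) with hε
    have hε0 : 0 < ε := lt_min (by linarith) (by linarith [Real.pi_pos])
    have hεπ : ε < Real.pi := lt_of_le_of_lt (min_le_right _ _) (by linarith [Real.pi_pos])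
    have hεabs : |ε| ≤ Real.pi := by rw [abs_of_pos hε0]; linarith
    have hne0 : ((ε : ℝ) : S1) ≠ 0 := by
      intro h
      have : dist ((ε : ℝ) : S1) (0 : S1) = 0 := by rw [h, dist_self]
      rw [dist_eq_norm, sub_zero, norm_eq_abs_of hεabs, abs_of_pos hε0] at this
      linarith
    have hnep : ((ε : ℝ) : S1) ≠ pp := by
      intro h
      have : dist ((ε : ℝ) : S1) pp = 0 := by rw [h, dist_self]
      rw [dist_eq_norm, pp, ← AddCircle.coe_sub, norm_sub_pi hεabs, abs_of_pos hε0] at this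
      linarith
    have hfε := key _ hne0 hnep
    have hdist : dist ((ε : ℝ) : S1) (0 : S1) = ε := by
      rw [dist_eq_norm, sub_zero, norm_eq_abs_of hεabs, abs_of_pos hε0]
    have hlip := abs_sub_le_dist_of_lip hL 0 ((ε : ℝ) : S1)
    rw [dist_comm, hdist, hfε] at hlip
    have : |f 0 - Real.pi / 2| ≤ |f 0 - Real.pi / 2| / 2 :=
      le_trans hlip (min_le_left _ _)
    linarith
  by_cases hθ0 : θ = 0
  · rw [hθ0]; exact h0'
  by_cases hθp : θ = pp
  · rw [hθp, f_pp hA, h0']; ring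
  exact key θ hθ0 hθp

end NbhdAux

namespace NbhdAux

def s1v (t : ℝ) (f : C(S1, ℝ)) : ℝ := (1 - t) * f 0 + t * Real.pi

def clCM (s : ℝ) (f : C(S1, ℝ)) : C(S1, ℝ) :=
  ⟨fun θ => cl s f θ,
    ((lip_aa s).continuous.max (f.continuous.min (lip_bb s).continuous))⟩

lemma s1v_bounds {t : ℝ} (ht0 : 0 ≤ t) (ht1 : t ≤ 1) {f : C(S1, ℝ)}
    (hf : f ∈ nbhd (Real.pi / 2)) : 0 ≤ s1v t f ∧ s1v t f ≤ Real.pi := by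
  obtain ⟨⟨hL, hA⟩, -⟩ := hf
  have hb := f_bounds hL hA 0
  have hπ := Real.pi_pos
  unfold s1v
  constructor
  · nlinarith [hb.1, hb.2]
  · nlinarith [hb.1, hb.2]

lemma H1_mem (t : ℝ) (ht0 : 0 ≤ t) (ht1 : t ≤ 1) (f : C(S1, ℝ))
    (hf : f ∈ nbhd (Real.pi / 2)) : clCM (s1v t f) f ∈ nbhd (Real.pi / 2) := by
  obtain ⟨hs0, hs1⟩ := s1v_bounds ht0 ht1 hf
  obtain ⟨⟨hL, hA⟩, hE⟩ := hf
  replace hA : ∀ θ : S1, f θ + f (θ + pp) = Real.pi := hA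
  have hA' : ∀ θ : S1, cl (s1v t f) f θ + cl (s1v t f) f (θ + pp) = Real.pi := by
    intro θ
    rw [cl_apt hs0 hs1 hA θ]; ring
  refine ⟨⟨lip_cl _ hL, hA'⟩, ?_⟩
  by_contra h
  push_neg at h
  have hconst : ∀ θ : S1, cl (s1v t f) f θ = Real.pi / 2 := by
    intro θ
    have h1 : Real.pi / 2 ≤ cl (s1v t f) (⇑f) θ := h θ
    have h2 : Real.pi / 2 ≤ cl (s1v t f) (⇑f) (θ + pp) := h (θ + pp)
    have h3 := hA' θ
    linarith [h1, h2, h3]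
  obtain ⟨θ₀, hθ₀⟩ := hE
  have := cl_forces hs0 hs1 hL hA hconst θ₀
  linarith

def fone : C(S1, ℝ) :=
  ⟨fun θ => Real.pi - dist θ 0, continuous_const.sub (continuous_id.dist continuous_const)⟩

lemma fone_mem : fone ∈ nbhd (Real.pi / 2) := by
  refine ⟨⟨lip1_const_sub lip_dist0 Real.pi, fun θ => ?_⟩, ⟨pp, ?_⟩⟩
  · show (Real.pi - dist θ 0) + (Real.pi - dist (θ + pp) 0) = Real.pi
    rw [dist_add_pp_zero]
    have := dist_apt θ
    linarith
  · show Real.pi - dist pp 0 < Real.pi / 2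
    rw [dist_pp_zero]
    linarith [Real.pi_pos]

def combo (t : ℝ) (g : C(S1, ℝ)) : C(S1, ℝ) :=
  ⟨fun θ => (1 - t) * g θ + t * fone θ, by
    exact ((continuous_const.mul g.continuous).add (continuous_const.mul fone.continuous))⟩

lemma K2_mem (t : ℝ) (ht0 : 0 ≤ t) (ht1 : t ≤ 1) (g : C(S1, ℝ))
    (hg : g ∈ nbhd (Real.pi / 2)) (hg0 : g 0 = Real.pi) :
    combo t g ∈ nbhd (Real.pi / 2) := by
  obtain ⟨⟨hL, hA⟩, -⟩ := hg
  replace hA : ∀ θ : S1, g θ + g (θ + pp) = Real.pi := hA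
  have hfone_lip : LipschitzWith 1 ⇑fone := lip1_const_sub lip_dist0 Real.pi
  refine ⟨⟨lip1_combo hL hfone_lip ht0 ht1, fun θ => ?_⟩, ⟨pp, ?_⟩⟩
  · show (1 - t) * g θ + t * fone θ + ((1 - t) * g (θ + pp) + t * fone (θ + pp)) = Real.pi
    have h1 := hA θ
    have h2 : fone θ + fone (θ + pp) = Real.pi := fone_mem.1.2 θ
    linear_combination (1 - t) * h1 + t * h2
  · show (1 - t) * g pp + t * fone pp < Real.pi / 2
    have hgpp : g pp = 0 := by
      have := f_pp hA
      rw [hg0] at this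
      linarith
    have hfpp : fone pp = 0 := by
      show Real.pi - dist pp 0 = 0
      rw [dist_pp_zero]; ring
    rw [hgpp, hfpp]
    have := Real.pi_pos
    nlinarith

/-! ### Continuity of the two homotopy kernels -/

def bigH : C((ℝ × C(S1, ℝ)) × S1, ℝ) where
  toFun q := cl (s1v q.1.1 q.1.2) q.1.2 q.2
  continuous_toFun := by
    have hev : Continuous fun q : (ℝ × C(S1, ℝ)) × S1 => q.1.2 q.2 :=
      continuous_eval.comp ((continuous_snd.comp continuous_fst).prodMk continuous_snd)
    have hev0 : Continuous fun q : (ℝ × C(S1, ℝ)) × S1 => q.1.2 0 :=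
      (continuous_eval_const (0 : S1)).comp (continuous_snd.comp continuous_fst)
    have ht : Continuous fun q : (ℝ × C(S1, ℝ)) × S1 => q.1.1 :=
      continuous_fst.comp continuous_fst
    have hd0 : Continuous fun q : (ℝ × C(S1, ℝ)) × S1 => dist q.2 (0 : S1) :=
      continuous_snd.dist continuous_const
    have hdp : Continuous fun q : (ℝ × C(S1, ℝ)) × S1 => dist q.2 pp :=
      continuous_snd.dist continuous_const
    have hs : Continuous fun q : (ℝ × C(S1, ℝ)) × S1 => s1v q.1.1 q.1.2 := by
      unfold s1v
      exact ((continuous_const.sub ht).mul hev0).add (ht.mul continuous_const)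
    unfold cl aa bb
    exact ((hs.sub hd0).max (((continuous_const.sub hs)).sub hdp)).max
      (hev.min ((hs.add hd0).min ((continuous_const.sub hs).add hdp)))

def bigK : C((ℝ × C(S1, ℝ)) × S1, ℝ) where
  toFun q := (1 - q.1.1) * q.1.2 q.2 + q.1.1 * (Real.pi - dist q.2 0)
  continuous_toFun := by
    have hev : Continuous fun q : (ℝ × C(S1, ℝ)) × S1 => q.1.2 q.2 :=
      continuous_eval.comp ((continuous_snd.comp continuous_fst).prodMk continuous_snd)
    have ht : Continuous fun q : (ℝ × C(S1, ℝ)) × S1 => q.1.1 :=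
      continuous_fst.comp continuous_fst
    have hd0 : Continuous fun q : (ℝ × C(S1, ℝ)) × S1 => dist q.2 (0 : S1) :=
      continuous_snd.dist continuous_const
    exact ((continuous_const.sub ht).mul hev).add (ht.mul (continuous_const.sub hd0))

end NbhdAux

namespace NbhdAux

lemma curryH_eq (t : ℝ) (f : C(S1, ℝ)) :
    bigH.curry (t, f) = clCM (s1v t f) f :=
  ContinuousMap.ext fun _ => rfl

lemma curryK_eq (t : ℝ) (g : C(S1, ℝ)) :
    bigK.curry (t, g) = combo t g :=
  ContinuousMap.ext fun _ => rfl

def Gmap : C(↥(nbhd (Real.pi / 2)), ↥(nbhd (Real.pi / 2))) where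
  toFun x := ⟨bigH.curry ((1 : ℝ), x.1), by
    rw [curryH_eq]
    exact H1_mem 1 zero_le_one le_rfl x.1 x.2⟩
  continuous_toFun := by
    apply Continuous.subtype_mk
    exact bigH.curry.continuous.comp (continuous_const.prodMk continuous_subtype_val)

lemma Gmap_zero (x : ↥(nbhd (Real.pi / 2))) : (Gmap x).1 0 = Real.pi := by
  show cl (s1v 1 x.1) x.1 0 = Real.pi
  have hs : s1v 1 x.1 = Real.pi := by unfold s1v; ring
  rw [hs]
  exact cl_zero Real.pi_pos.le le_rfl _

def hom1 : ContinuousMap.Homotopy (ContinuousMap.id ↥(nbhd (Real.pi / 2))) Gmap where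
  toFun p := ⟨bigH.curry ((p.1.1 : ℝ), p.2.1), by
    rw [curryH_eq]
    exact H1_mem _ p.1.2.1 p.1.2.2 _ p.2.2⟩
  continuous_toFun := by
    apply Continuous.subtype_mk
    exact bigH.curry.continuous.comp
      (((continuous_subtype_val.comp continuous_fst)).prodMk
        (continuous_subtype_val.comp continuous_snd))
  map_zero_left x := by
    apply Subtype.ext
    apply ContinuousMap.ext
    intro θ
    show cl (s1v 0 x.1) x.1 θ = x.1 θ
    have hs : s1v 0 x.1 = x.1 0 := by unfold s1v; ring
    rw [hs]
    exact cl_eq_self x.2.1.1 x.2.1.2 θ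
  map_one_left x := by
    apply Subtype.ext
    rfl

def hom2 : ContinuousMap.Homotopy Gmap
    (ContinuousMap.const ↥(nbhd (Real.pi / 2)) ⟨fone, fone_mem⟩) where
  toFun p := ⟨bigK.curry ((p.1.1 : ℝ), (Gmap p.2).1), by
    rw [curryK_eq]
    exact K2_mem _ p.1.2.1 p.1.2.2 _ (Gmap p.2).2 (Gmap_zero p.2)⟩
  continuous_toFun := by
    apply Continuous.subtype_mk
    exact bigK.curry.continuous.comp
      ((continuous_subtype_val.comp continuous_fst).prodMk
        (continuous_subtype_val.comp (Gmap.continuous.comp continuous_snd)))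
  map_zero_left x := by
    apply Subtype.ext
    apply ContinuousMap.ext
    intro θ
    show (1 - 0) * (Gmap x).1 θ + 0 * (Real.pi - dist θ 0) = (Gmap x).1 θ
    ring
  map_one_left x := by
    apply Subtype.ext
    apply ContinuousMap.ext
    intro θ
    show (1 - 1) * (Gmap x).1 θ + 1 * (Real.pi - dist θ 0) = Real.pi - dist θ 0
    ring

end NbhdAux

/-- The open `π/2`-neighborhood of the Kuratowski image of `S¹` in `E(S¹)`,
with the subspace topology, is contractible. -/
theorem nbhd_pi_div_two_contractible : ContractibleSpace ↥(nbhd (Real.pi / 2)) := by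
  rw [contractible_iff_id_nullhomotopic]
  exact ⟨⟨NbhdAux.fone, NbhdAux.fone_mem⟩, ⟨NbhdAux.hom1.trans NbhdAux.hom2⟩⟩

end
end

section
/- For every r ∈ (0, π/3], the open r-neighborhood B_r(S¹, E(S¹)) = {f ∈ E(S¹) : ∃ θ ∈ S¹, f(θ) < r}, equipped with the subspace topology inherited from E(S¹), is homotopy equivalent to S¹; in fact, the Kuratowski image of S¹ is a deformation retract of B_r(S¹, E(S¹)). -/
noncomputable section

/-!
For `f` in the neighbourhood, the tight-span inequality `d(u, v) ≤ f u + f v` makes the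
sublevel set `{f < r}` have pairwise distances `< 2r`; for `r ≤ π/3` it therefore lies in an arc
of radius `R ≤ r` that can be lifted isometrically to a real interval. The argument of the
barycenter of the mass distribution `max (r - f) 0` on the unit circle lies in that arc, hence
within `r` of a point where `f < r`. So the straight-line homotopy from `d(center f, ·)` to `f`
stays in the neighbourhood, while `center` is continuous in `f` and, by symmetry of the mass,
sends `d(θ, ·)` back to `θ`.
-/

open Real Complex Set

lemma exists_mem_abs_sub_lt_of_mem_Icc {S : Set ℝ} {r ξ : ℝ} (hS : S.Nonempty)
    (hpair : ∀ x ∈ S, ∀ y ∈ S, |x - y| < 2 * r) (hξ : ξ ∈ Icc (sInf S) (sSup S)) :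
    ∃ x ∈ S, |ξ - x| < r := by
  obtain ⟨x₀, hx₀⟩ := hS
  have hr : 0 < r := by simpa using hpair x₀ hx₀ x₀ hx₀
  obtain ⟨y, hy, hξy⟩ := exists_lt_of_lt_csSup ⟨x₀, hx₀⟩ (by linarith [hξ.2] : ξ - r < sSup S)
  obtain ⟨x, hx, hxξ⟩ := exists_lt_of_csInf_lt ⟨x₀, hx₀⟩ (by linarith [hξ.1] : sInf S < ξ + r)
  by_contra! hfar
  have hyx := (abs_lt.1 (hpair y hy x hx)).2
  rcases le_abs'.1 (hfar y hy) with h | h <;> rcases le_abs'.1 (hfar x hx) with h' | h' <;>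
    linarith

lemma abs_arg_le_of_cos_mul_norm_le {w : ℂ} {R : ℝ} (hw : w ≠ 0) (hR₀ : 0 ≤ R) (hRπ : R ≤ π)
    (h : Real.cos R * ‖w‖ ≤ w.re) : |arg w| ≤ R := by
  have hcos : Real.cos R ≤ Real.cos |arg w| := by
    rwa [Real.cos_abs, cos_arg hw, le_div_iff₀ (norm_pos_iff.2 hw)]
  exact (Real.strictAntiOn_cos.le_iff_ge ⟨hR₀, hRπ⟩ ⟨abs_nonneg _, abs_arg_le_pi w⟩).1 hcos

namespace S1

lemma norm_coe_eq_abs {x : ℝ} (h : |x| ≤ π) : ‖(x : S1)‖ = |x| := by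
  rwa [AddCircle.norm_coe_eq_abs_iff _ two_pi_pos.ne', abs_of_pos two_pi_pos,
    mul_div_cancel_left₀ _ two_ne_zero]

lemma dist_coe_eq_abs {x y : ℝ} (h : |x - y| ≤ π) : dist (x : S1) y = |x - y| := by
  rw [dist_eq_norm, ← AddCircle.coe_sub, norm_coe_eq_abs h]

lemma dist_coe_le_abs (x y : ℝ) : dist (x : S1) y ≤ |x - y| := by
  rw [dist_eq_norm, ← AddCircle.coe_sub]
  exact QuotientAddGroup.norm_mk_le_norm

lemma exists_coe_eq_abs_sub_le (θ : S1) (t : ℝ) : ∃ x : ℝ, (x : S1) = θ ∧ |x - t| ≤ π := by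
  obtain ⟨⟨x, hx⟩, rfl⟩ := (AddCircle.equivIoc (2 * π) (t - π)).symm.surjective θ
  exact ⟨x, rfl, abs_le.2 ⟨by linarith [hx.1], by linarith [hx.2]⟩⟩

lemma coe_sub_two_pi (x : ℝ) : ((x - 2 * π : ℝ) : S1) = x := by
  rw [AddCircle.coe_sub, AddCircle.coe_period, sub_zero]

lemma dist_add_pi (θ φ : S1) : dist θ (φ + π) = π - dist θ φ := by
  obtain ⟨b, rfl⟩ := QuotientAddGroup.mk_surjective φ
  obtain ⟨x, rfl, hx⟩ := exists_coe_eq_abs_sub_le θ (b + π)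
  obtain ⟨hx₁, hx₂⟩ := abs_le.1 hx
  rw [← AddCircle.coe_add, dist_coe_eq_abs hx]
  rcases le_or_gt (x - b) π with h | h
  · rw [dist_coe_eq_abs (abs_le.2 ⟨by linarith, h⟩)]
    rw [abs_of_nonpos (by linarith), abs_of_nonneg (by linarith)]
    ring
  · rw [← coe_sub_two_pi x, dist_coe_eq_abs (abs_le.2 ⟨by linarith, by linarith⟩)]
    rw [abs_of_nonneg (by linarith), abs_of_nonpos (by linarith)]
    ring

lemma abs_sub_lt_of_dist_coe_lt {x y ε : ℝ} (hxy : |x - y| < 2 * π - ε)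
    (h : dist (x : S1) y < ε) : |x - y| < ε := by
  have hε : 0 < ε := dist_nonneg.trans_lt h
  obtain ⟨hxy₁, hxy₂⟩ := abs_lt.1 hxy
  rcases le_or_gt |x - y| π with hπ | hπ
  · rwa [← dist_coe_eq_abs hπ]
  · exfalso
    rcases lt_abs.1 hπ with hπ' | hπ'
    · rw [← coe_sub_two_pi x, dist_coe_eq_abs (abs_le.2 ⟨by linarith, by linarith⟩),
        abs_of_neg (by linarith)] at h
      linarith [le_abs_self (x - y)]
    · rw [← AddCircle.coe_add_period, dist_coe_eq_abs (abs_le.2 ⟨by linarith, by linarith⟩),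
        abs_of_pos (by linarith)] at h
      linarith [neg_abs_le (x - y)]

def tightSpan : Set C(S1, ℝ) :=
  {f | LipschitzWith 1 ⇑f ∧ ∀ θ : S1, f θ + f (θ + ((Real.pi : ℝ) : S1)) = Real.pi}

lemma mem_nbhd_iff {r : ℝ} {f : C(S1, ℝ)} : f ∈ nbhd r ↔ f ∈ tightSpan ∧ ∃ θ, f θ < r :=
  Iff.rfl

lemma convex_tightSpan : Convex ℝ tightSpan := by
  rintro f ⟨hfL, hfA⟩ g ⟨hgL, hgA⟩ a b ha hb hab
  refine ⟨LipschitzWith.of_dist_le_mul fun x y => ?_, fun θ => ?_⟩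
  · have hf := hfL.dist_le_mul x y
    have hg := hgL.dist_le_mul x y
    simp only [NNReal.coe_one, one_mul, Real.dist_eq] at hf hg ⊢
    simp only [ContinuousMap.add_apply, ContinuousMap.smul_apply, smul_eq_mul]
    calc |a * f x + b * g x - (a * f y + b * g y)| = |a * (f x - f y) + b * (g x - g y)| := by
          ring_nf
      _ ≤ a * |f x - f y| + b * |g x - g y| := by
          refine (abs_add_le _ _).trans ?_
          rw [abs_mul, abs_mul, abs_of_nonneg ha, abs_of_nonneg hb]
      _ ≤ a * dist x y + b * dist x y := by gcongr
      _ = dist x y := by rw [← add_mul, hab, one_mul]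
  · simp only [ContinuousMap.add_apply, ContinuousMap.smul_apply, smul_eq_mul]
    linear_combination a * hfA θ + b * hgA θ + Real.pi * hab

lemma dist_le_add_of_mem_tightSpan {f : C(S1, ℝ)} (hf : f ∈ tightSpan) (u v : S1) :
    dist u v ≤ f u + f v := by
  have hLip : |f v - f (u + π)| ≤ π - dist v u := by
    simpa [Real.dist_eq, dist_add_pi] using hf.1.dist_le_mul v (u + π)
  have hA := hf.2 u
  rw [dist_comm]
  linarith [neg_abs_le (f v - f (u + π))]

def kuratowski : C(S1, C(S1, ℝ)) :=
  ContinuousMap.curry ⟨fun p : S1 × S1 => dist p.1 p.2, continuous_dist⟩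

@[simp]
lemma kuratowski_apply (θ φ : S1) : kuratowski θ φ = dist θ φ := rfl

lemma kuratowski_mem_tightSpan (θ : S1) : kuratowski θ ∈ tightSpan :=
  ⟨LipschitzWith.dist_right θ, fun φ => by simp [dist_add_pi]⟩

lemma exists_arc_of_mem_tightSpan {f : C(S1, ℝ)} (hf : f ∈ tightSpan) {r : ℝ} (hr : r ≤ π / 3)
    {t₀ : S1} (ht₀ : f t₀ < r) :
    ∃ c R : ℝ, R ≤ r ∧ (∀ θ, f θ < r → dist θ c ≤ R) ∧
      ∀ ξ : ℝ, |ξ - c| ≤ R → ∃ φ, f φ < r ∧ dist (ξ : S1) φ < r := by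
  obtain ⟨t, rfl⟩ := QuotientAddGroup.mk_surjective t₀
  set S : Set ℝ := {x | |x - t| ≤ π ∧ f x < r}
  have hnear : ∀ x ∈ S, |x - t| < 2 * r := fun x hx => by
    rw [← dist_coe_eq_abs hx.1]
    linarith [dist_le_add_of_mem_tightSpan hf x t, hx.2]
  have hpair : ∀ x ∈ S, ∀ y ∈ S, |x - y| < 2 * r := fun x hx y hy => by
    refine abs_sub_lt_of_dist_coe_lt ?_ ?_
    -- `r ≤ π / 3` is used here: lifts within `4r ≤ 2π - 2r` of each other cannot wrap around.
    · calc |x - y| ≤ |x - t| + |y - t| := (abs_sub_le x t y).trans_eq (by rw [abs_sub_comm t y])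
        _ < 2 * r + 2 * r := add_lt_add (hnear x hx) (hnear y hy)
        _ ≤ 2 * π - 2 * r := by linarith
    · linarith [dist_le_add_of_mem_tightSpan hf x y, hx.2, hy.2]
  have hne : S.Nonempty := ⟨t, by simpa [S] using ⟨pi_pos.le, ht₀⟩⟩
  have hbdd : BddBelow S ∧ BddAbove S :=
    ⟨⟨t - π, fun x hx => by linarith [(abs_le.1 hx.1).1]⟩,
      ⟨t + π, fun x hx => by linarith [(abs_le.1 hx.1).2]⟩⟩
  have hdiam : sSup S - sInf S ≤ 2 * r := by
    refine sub_le_iff_le_add.2 (csSup_le hne fun x hx => ?_)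
    have : x - 2 * r ≤ sInf S :=
      le_csInf hne fun y hy => by linarith [(abs_lt.1 (hpair x hx y hy)).2]
    linarith
  refine ⟨(sInf S + sSup S) / 2, (sSup S - sInf S) / 2, by linarith, fun θ hθ => ?_,
    fun ξ hξ => ?_⟩
  · obtain ⟨x, rfl, hx⟩ := exists_coe_eq_abs_sub_le θ t
    have h₁ := csInf_le hbdd.1 ⟨hx, hθ⟩
    have h₂ := le_csSup hbdd.2 ⟨hx, hθ⟩
    exact (dist_coe_le_abs _ _).trans (abs_le.2 ⟨by linarith, by linarith⟩)
  · obtain ⟨hξ₁, hξ₂⟩ := abs_le.1 hξ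
    obtain ⟨x, hx, hξx⟩ := exists_mem_abs_sub_lt_of_mem_Icc hne hpair
      ⟨by linarith, by linarith⟩
    exact ⟨x, hx.2, (dist_coe_le_abs _ _).trans_lt hξx⟩

def barycenter (W : S1 → ℝ) : ℂ := ∫ x in (-π)..π, (W x : ℂ) * exp (x * I)

lemma barycenter_eq_exp_mul (W : S1 → ℝ) (c : ℝ) :
    barycenter W = exp (c * I) * barycenter fun θ => W (c + θ) := by
  set g : ℝ → ℂ := fun x => (W x : ℂ) * exp (x * I)
  have hg : Function.Periodic g (2 * π) := fun x => by
    simp only [g, AddCircle.coe_add_period, ofReal_add, add_mul, Complex.exp_add, ofReal_mul,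
      ofReal_ofNat, exp_two_pi_mul_I, mul_one]
  calc barycenter W = ∫ x in (-π)..π, g x := rfl
    _ = ∫ x in (c - π)..(c + π), g x := by
        simpa only [show -π + 2 * π = π by ring, show c - π + 2 * π = c + π by ring]
          using hg.intervalIntegral_add_eq (-π) (c - π)
    _ = ∫ u in (-π)..π, g (c + u) := by
        rw [intervalIntegral.integral_comp_add_left, sub_eq_add_neg]
    _ = ∫ u in (-π)..π, exp (c * I) * ((W (c + u) : ℂ) * exp (u * I)) := by
        congr 1; ext u
        simp only [g, AddCircle.coe_add, ofReal_add, add_mul, Complex.exp_add]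
        ring
    _ = _ := intervalIntegral.integral_const_mul _ _

lemma barycenter_ne_zero_and_abs_arg_le {W : S1 → ℝ} (hW : Continuous W) (hW₀ : ∀ θ, 0 ≤ W θ)
    {R : ℝ} (hR : R < π / 2) (hsupp : ∀ θ, 0 < W θ → ‖θ‖ ≤ R) {θ₀ : S1} (hθ₀ : 0 < W θ₀) :
    barycenter W ≠ 0 ∧ |arg (barycenter W)| ≤ R := by
  have hR₀ : 0 ≤ R := (norm_nonneg θ₀).trans (hsupp θ₀ hθ₀)
  have hπ : -π ≤ π := by linarith [pi_pos]
  have hWc : Continuous fun x : ℝ => W x := hW.comp (AddCircle.continuous_mk' _)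
  have hcont : Continuous fun x : ℝ => (W x : ℂ) * exp (x * I) := by fun_prop
  have hmass : 0 < ∫ x in (-π)..π, W x := by
    obtain ⟨x₀, rfl, hx₀⟩ := exists_coe_eq_abs_sub_le θ₀ 0
    rw [sub_zero] at hx₀
    exact intervalIntegral.integral_pos (by linarith [pi_pos]) hWc.continuousOn
      (fun x _ => hW₀ x) ⟨x₀, abs_le.1 hx₀, hθ₀⟩
  have hnorm : ‖barycenter W‖ ≤ ∫ x in (-π)..π, W x := by
    refine (intervalIntegral.norm_integral_le_integral_norm hπ).trans_eq ?_
    simp [norm_exp_ofReal_mul_I, abs_of_nonneg (hW₀ _)]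
  have hre : Real.cos R * ∫ x in (-π)..π, W x ≤ (barycenter W).re := by
    rw [barycenter, ← RCLike.re_to_complex,
      ← intervalIntegral.intervalIntegral_re (hcont.intervalIntegrable _ _),
      ← intervalIntegral.integral_const_mul]
    refine intervalIntegral.integral_mono_on hπ ((hWc.intervalIntegrable _ _).const_mul _)
      ((RCLike.continuous_re.comp hcont).intervalIntegrable _ _) fun x hx => ?_
    simp only [RCLike.re_to_complex, re_ofReal_mul, exp_ofReal_mul_I_re]
    rcases (hW₀ x).eq_or_lt with h0 | hpos
    · simp [← h0]
    · have hxR : |x| ≤ R := by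
        rw [← norm_coe_eq_abs (abs_le.2 hx)]
        exact hsupp x hpos
      rw [mul_comm, ← Real.cos_abs x]
      exact mul_le_mul_of_nonneg_left
        (Real.cos_le_cos_of_nonneg_of_le_pi (abs_nonneg x) (by linarith) hxR) hpos.le
  have hre_pos : 0 < (barycenter W).re :=
    (mul_pos (Real.cos_pos_of_mem_Ioo ⟨by linarith, hR⟩) hmass).trans_le hre
  have hne : barycenter W ≠ 0 := fun h => by simp [h] at hre_pos
  refine ⟨hne, abs_arg_le_of_cos_mul_norm_le hne hR₀ (by linarith) ?_⟩
  exact (mul_le_mul_of_nonneg_left hnorm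
    (Real.cos_nonneg_of_mem_Icc ⟨by linarith, by linarith⟩)).trans hre

lemma im_barycenter_eq_zero {W : S1 → ℝ} (hW : ∀ θ, W (-θ) = W θ) : (barycenter W).im = 0 := by
  rw [← conj_eq_iff_im, barycenter, ← intervalIntegral.intervalIntegral_conj]
  have := intervalIntegral.integral_comp_neg (a := -π) (b := π)
    fun x : ℝ => (W x : ℂ) * exp (x * I)
  rw [neg_neg] at this
  rw [← this]
  congr 1; ext x
  simp [← exp_conj, hW]

def weight (r : ℝ) (f : C(S1, ℝ)) (θ : S1) : ℝ := max (r - f θ) 0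

def center (r : ℝ) (f : C(S1, ℝ)) : S1 := (arg (barycenter (weight r f)) : ℝ)

lemma coe_arg_barycenter_eq {W : S1 → ℝ} {c : ℝ} (h : barycenter (fun θ => W (c + θ)) ≠ 0) :
    ((arg (barycenter W) : ℝ) : S1) = ((c + arg (barycenter fun θ => W (c + θ)) : ℝ) : S1) := by
  have := arg_mul_coe_angle (exp_ne_zero (c * I)) h
  rw [arg_exp_mul_I, Real.Angle.coe_toIocMod, ← barycenter_eq_exp_mul] at this
  rw [AddCircle.coe_add]
  exact this

lemma barycenter_weight_ne_zero_and_exists_dist_center_lt {r : ℝ} (hr : r ≤ π / 3)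
    {f : C(S1, ℝ)} (hf : f ∈ nbhd r) :
    barycenter (weight r f) ≠ 0 ∧ ∃ φ, f φ < r ∧ dist (center r f) φ < r := by
  obtain ⟨hfE, t₀, ht₀⟩ := mem_nbhd_iff.1 hf
  obtain ⟨c, R, hRr, harc, hnear⟩ := exists_arc_of_mem_tightSpan hfE hr ht₀
  have hsupp : ∀ θ, 0 < weight r f (c + θ) → ‖θ‖ ≤ R := fun θ hθ => by
    rw [← dist_self_add_left θ (c : S1)]
    exact harc _ (by simpa [weight] using hθ)
  obtain ⟨hne, harg⟩ := barycenter_ne_zero_and_abs_arg_le (W := fun θ => weight r f (c + θ))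
    (by unfold weight; fun_prop) (fun _ => le_max_right _ _) (by linarith [pi_pos]) hsupp
    (θ₀ := t₀ - c) (by simpa [weight] using ht₀)
  refine ⟨?_, ?_⟩
  · rw [barycenter_eq_exp_mul _ c]
    exact mul_ne_zero (exp_ne_zero _) hne
  · obtain ⟨φ, hφ, hdist⟩ := hnear _ (by rwa [add_sub_cancel_left])
    exact ⟨φ, hφ, by rwa [center, coe_arg_barycenter_eq hne]⟩

lemma center_kuratowski {r : ℝ} (hr₀ : 0 < r) (hr : r < π / 2) (θ : S1) :
    center r (kuratowski θ) = θ := by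
  obtain ⟨t, rfl⟩ := QuotientAddGroup.mk_surjective θ
  have hW : (fun φ => weight r (kuratowski t) (t + φ)) = fun φ => max (r - ‖φ‖) 0 := by
    ext φ
    simp [weight]
  obtain ⟨hne, harg⟩ := barycenter_ne_zero_and_abs_arg_le (W := fun φ : S1 => max (r - ‖φ‖) 0)
    (by fun_prop) (fun _ => le_max_right _ _) hr
    (fun φ hφ => by linarith [lt_max_iff.1 hφ |>.resolve_right (lt_irrefl 0)]) (θ₀ := 0)
    (by simpa using hr₀)
  have him := im_barycenter_eq_zero (W := fun φ : S1 => max (r - ‖φ‖) 0) fun φ => by simp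
  have hre := abs_arg_le_pi_div_two_iff.1 (harg.trans hr.le)
  rw [center, coe_arg_barycenter_eq (c := t) (by rwa [hW]), hW, arg_eq_zero_iff.2 ⟨hre, him⟩,
    add_zero]

lemma continuous_barycenter_weight (r : ℝ) :
    Continuous fun f : C(S1, ℝ) => barycenter (weight r f) :=
  intervalIntegral.continuous_parametric_intervalIntegral_of_continuous'
    (by unfold weight; fun_prop) _ _

lemma kuratowski_mem_nbhd {r : ℝ} (hr₀ : 0 < r) (θ : S1) : kuratowski θ ∈ nbhd r :=
  mem_nbhd_iff.2 ⟨kuratowski_mem_tightSpan θ, θ, by simpa using hr₀⟩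

lemma segment_kuratowski_center_mem_nbhd {r : ℝ} (hr : r ≤ π / 3) {f : C(S1, ℝ)}
    (hf : f ∈ nbhd r) {s : ℝ} (hs₀ : 0 ≤ s) (hs₁ : s ≤ 1) :
    (1 - s) • kuratowski (center r f) + s • f ∈ nbhd r := by
  obtain ⟨-, φ, hφ, hdist⟩ := barycenter_weight_ne_zero_and_exists_dist_center_lt hr hf
  refine mem_nbhd_iff.2 ⟨convex_tightSpan (kuratowski_mem_tightSpan _) (mem_nbhd_iff.1 hf).1
    (by linarith) hs₀ (by ring), φ, ?_⟩
  simpa using convex_Iio r (show kuratowski (center r f) φ < r from hdist) hφ (by linarith) hs₀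
    (by ring)

def centerMap {r : ℝ} (hr : r ≤ π / 3) : C(nbhd r, S1) where
  toFun f := center r f
  continuous_toFun := continuous_iff_continuousAt.2 fun f =>
    (continuousAt_arg_coe_angle
      (barycenter_weight_ne_zero_and_exists_dist_center_lt hr f.2).1).comp
      (f := fun f : nbhd r => barycenter (weight r f))
      ((continuous_barycenter_weight r).comp continuous_subtype_val).continuousAt

def kuratowskiMap {r : ℝ} (hr₀ : 0 < r) : C(S1, nbhd r) where
  toFun θ := ⟨kuratowski θ, kuratowski_mem_nbhd hr₀ θ⟩
  continuous_toFun := kuratowski.continuous.subtype_mk _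

def deformation {r : ℝ} (hr₀ : 0 < r) (hr : r ≤ π / 3) :
    ((kuratowskiMap hr₀).comp (centerMap hr)).Homotopy (ContinuousMap.id (nbhd r)) where
  toFun p := ⟨(1 - (p.1 : ℝ)) • kuratowski (center r p.2) + (p.1 : ℝ) • (p.2 : C(S1, ℝ)),
    segment_kuratowski_center_mem_nbhd hr p.2.2 p.1.2.1 p.1.2.2⟩
  continuous_toFun := by
    have hk : Continuous fun p : unitInterval × nbhd r => kuratowski (center r p.2) :=
      kuratowski.continuous.comp ((centerMap hr).continuous.comp continuous_snd)
    exact Continuous.subtype_mk (by fun_prop) _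
  map_zero_left f := Subtype.ext (by simp [centerMap, kuratowskiMap])
  map_one_left f := Subtype.ext (by simp)

lemma centerMap_comp_kuratowskiMap {r : ℝ} (hr₀ : 0 < r) (hr : r ≤ π / 3) :
    (centerMap hr).comp (kuratowskiMap hr₀) = ContinuousMap.id S1 :=
  ContinuousMap.ext fun θ => center_kuratowski hr₀ (by linarith [pi_pos]) θ

end S1

open S1 in
/-- For every `r ∈ (0, π/3]`, the open `r`-neighborhood of the Kuratowski image of
`S¹` in `E(S¹)` is homotopy equivalent to `S¹`; in fact the Kuratowski image
`{d(θ, ·) : θ ∈ S¹}` is a deformation retract of it. -/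
theorem nbhd_homotopyEquiv_circle (r : ℝ) (hr0 : 0 < r) (hr : r ≤ Real.pi / 3) :
    Nonempty (ContinuousMap.HomotopyEquiv ↥(nbhd r) S1) ∧
    ∃ ρ : C(↥(nbhd r), ↥(nbhd r)),
      (∀ b : ↥(nbhd r), ∃ θ : S1, ⇑(ρ b).1 = fun φ : S1 => dist θ φ) ∧
      (∀ b : ↥(nbhd r), (∃ θ : S1, ⇑b.1 = fun φ : S1 => dist θ φ) → ρ b = b) ∧
      ρ.Homotopic (ContinuousMap.id ↥(nbhd r)) := by
  have hsection := centerMap_comp_kuratowskiMap hr0 hr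
  refine ⟨⟨⟨centerMap hr, kuratowskiMap hr0, ⟨deformation hr0 hr⟩, hsection ▸ .refl _⟩⟩,
    (kuratowskiMap hr0).comp (centerMap hr), fun b => ⟨center r b, rfl⟩, ?_, ⟨deformation hr0 hr⟩⟩
  rintro b ⟨θ, hθ⟩
  obtain rfl : b = kuratowskiMap hr0 θ := Subtype.ext (ContinuousMap.coe_injective hθ)
  exact congrArg (kuratowskiMap hr0) (DFunLike.congr_fun hsection θ)

end
end

section
/- Let X ⊆ ℝⁿ_∞ be compact and nonempty. Then every X-surrounding point p is X-minimal: for every x ∈ X there exists y ∈ X with d_∞(p,x) + d_∞(p,y) = d_∞(x,y). Furthermore, for any two X-surrounding points p and q, sup_{x∈X} |d_∞(p,x) − d_∞(q,x)| = d_∞(p,q); in other words, the map sending an X-surrounding point z to the function d_∞(z,·)|_X (with sup metric) is distance-preserving. -/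
/-- `p` is an `X`-surrounding point in `ℝⁿ_∞` (here `Fin n → ℝ` carries the `ℓ∞` metric):
for every coordinate `i` and sign `ξ ∈ {±1}`, the cone `p + ξΛ_i` meets `X`. -/
def Surrounds {n : ℕ} (X : Set (Fin n → ℝ)) (p : Fin n → ℝ) : Prop :=
  ∀ i : Fin n, ∀ ξ : ℝ, ξ = 1 ∨ ξ = -1 → ∃ x ∈ X, ξ * (x i - p i) = dist x p

lemma pi_dist_coord_le {n : ℕ} (x p : Fin n → ℝ) (i : Fin n) : |x i - p i| ≤ dist x p := by
  rw [← Real.dist_eq]; exact dist_le_pi_dist x p i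

lemma exists_coord {n : ℕ} (hn : 0 < n) (x y : Fin n → ℝ) : ∃ i, dist x y = |x i - y i| := by
  have hu : (Finset.univ : Finset (Fin n)).Nonempty := ⟨⟨0, hn⟩, Finset.mem_univ _⟩
  obtain ⟨i, _, hi⟩ := Finset.exists_mem_eq_sup Finset.univ hu (fun i => nndist (x i) (y i))
  refine ⟨i, ?_⟩
  rw [dist_pi_def, hi, coe_nndist, Real.dist_eq]

lemma step {n : ℕ} {X : Set (Fin n → ℝ)} {p : Fin n → ℝ} (hp : Surrounds X p)
    (w : Fin n → ℝ) (i : Fin n) (hi : dist w p = |w i - p i|) :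
    ∃ y ∈ X, dist w p + dist y p = dist w y := by
  set ξ : ℝ := if w i ≤ p i then 1 else -1 with hξdef
  have hξ' : ξ = 1 ∨ ξ = -1 := by by_cases h : w i ≤ p i <;> simp [hξdef, h]
  have hξw : ξ * (p i - w i) = dist w p := by
    rw [hi]
    by_cases h : w i ≤ p i
    · rw [hξdef, if_pos h, one_mul, abs_of_nonpos (by linarith)]; ring
    · rw [hξdef, if_neg h, abs_of_nonneg (by linarith)]; ring
  obtain ⟨y, hy, hkey⟩ := hp i ξ hξ'
  refine ⟨y, hy, ?_⟩
  have h1 : dist w y ≤ dist w p + dist y p := by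
    calc dist w y ≤ dist w p + dist p y := dist_triangle _ _ _
    _ = dist w p + dist y p := by rw [dist_comm p y]
  have hco : |w i - y i| ≤ dist w y := pi_dist_coord_le w y i
  have habs : ξ * (y i - w i) ≤ |w i - y i| := by
    rcases hξ' with h | h
    · rw [h, one_mul, abs_sub_comm]; exact le_abs_self _
    · rw [h, neg_one_mul, abs_sub_comm, neg_sub]
      have : w i - y i ≤ |y i - w i| := by rw [abs_sub_comm]; exact le_abs_self _
      rw [abs_sub_comm]; linarith [le_abs_self (w i - y i)]
  have hsum : ξ * (y i - w i) = dist y p + dist w p := by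
    have e : ξ * (y i - w i) = ξ * (y i - p i) + ξ * (p i - w i) := by ring
    rw [e, hkey, hξw]
  linarith

/-- Every `X`-surrounding point `p` of a compact nonempty `X ⊆ ℝⁿ_∞` is `X`-minimal, and
the map sending an `X`-surrounding point `z` to `d_∞(z,·)|_X` (with the sup metric)
is distance-preserving. -/
theorem surrounding_minimal_and_isometric {n : ℕ} (X : Set (Fin n → ℝ))
    (hX : IsCompact X) (hne : X.Nonempty) :
    (∀ p : Fin n → ℝ, Surrounds X p →
      ∀ x ∈ X, ∃ y ∈ X, dist p x + dist p y = dist x y) ∧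
    (∀ p q : Fin n → ℝ, Surrounds X p → Surrounds X q →
      (⨆ x : X, |dist p (x : Fin n → ℝ) - dist q (x : Fin n → ℝ)|) = dist p q) := by
  haveI : Nonempty X := hne.to_subtype
  rcases Nat.eq_zero_or_pos n with hn | hn
  · subst hn
    have h0 : ∀ a b : Fin 0 → ℝ, dist a b = 0 := fun a b => by
      rw [Subsingleton.elim a b, dist_self]
    constructor
    · intro p _ x hx
      exact ⟨x, hx, by simp [h0]⟩
    · intro p q _ _
      simp [h0]
  · constructor
    · intro p hp x hx
      obtain ⟨i, hi⟩ := exists_coord hn x p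
      obtain ⟨y, hy, h⟩ := step hp x i hi
      exact ⟨y, hy, by rw [dist_comm p x, dist_comm p y]; linarith⟩
    · intro p q hp hq
      obtain ⟨i, hi⟩ := exists_coord hn p q
      obtain ⟨x, hx, h⟩ := step hq p i hi
      apply le_antisymm
      · exact ciSup_le fun x => abs_dist_sub_le _ _ _
      · have hb : BddAbove (Set.range fun x : X => |dist p (x : Fin n → ℝ) - dist q (x : Fin n → ℝ)|) :=
          ⟨dist p q, by rintro _ ⟨x, rfl⟩; exact abs_dist_sub_le _ _ _⟩
        have hval : dist p q ≤ |dist p x - dist q x| := by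
          have hq' : dist q x = dist x q := dist_comm q x
          have : dist p q ≤ dist p x - dist q x := by linarith
          linarith [le_abs_self (dist p x - dist q x)]
        exact hval.trans (le_ciSup hb ⟨x, hx⟩)
end

section
/- Let S²_∞ := {x ∈ ℝ³ : ‖x‖₂ = 1} be the Euclidean unit sphere endowed with the ℓ∞ metric of ℝ³. Then ℰ(S²_∞) = F(S²_∞): every S²_∞-minimal point of ℝ³ is S²_∞-surrounding (and conversely). Consequently, this set with the ℓ∞ metric is isometric to the tight span E(S²_∞), via the distance-preserving map z ↦ d_∞(z,·)|_{S²_∞}. -/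
/-- The set `ℰ(X)` of `X`-minimal points of `ℝⁿ_∞`. -/
def minimalPts {n : ℕ} (X : Set (Fin n → ℝ)) : Set (Fin n → ℝ) :=
  {z | ∀ x ∈ X, ∃ y ∈ X, dist x z + dist z y = dist x y}

/-- The Euclidean unit sphere `S²_∞ ⊆ ℝ³`, carrying the `ℓ∞` metric. -/
def S2inf : Set (Fin 3 → ℝ) := {x | Real.sqrt (∑ i, x i ^ 2) = 1}


namespace S2Aux


lemma abs_coord_le_dist (x y : Fin 3 → ℝ) (i : Fin 3) : |x i - y i| ≤ dist x y := by
  have h := dist_le_pi_dist x y i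
  rwa [Real.dist_eq] at h

lemma dist_le_of_coords {x y : Fin 3 → ℝ} {r : ℝ} (hr : 0 ≤ r)
    (h : ∀ i, |x i - y i| ≤ r) : dist x y ≤ r := by
  rw [dist_pi_le_iff hr]
  intro i
  rw [Real.dist_eq]
  exact h i

lemma exists_coord_eq_dist (x y : Fin 3 → ℝ) : ∃ i, |x i - y i| = dist x y := by
  obtain ⟨i, -, hi⟩ := Finset.exists_max_image Finset.univ (fun i => |x i - y i|)
    ⟨0, Finset.mem_univ 0⟩
  refine ⟨i, le_antisymm (abs_coord_le_dist x y i) ?_⟩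
  exact dist_le_of_coords (abs_nonneg _) fun j => hi j (Finset.mem_univ j)

lemma sum_sq {x : Fin 3 → ℝ} (hx : x ∈ S2inf) : (∑ i, x i ^ 2) = 1 :=
  Real.sqrt_eq_one.mp hx

lemma abs_coord_le_one {x : Fin 3 → ℝ} (hx : x ∈ S2inf) (i : Fin 3) : |x i| ≤ 1 := by
  have h1 : x i ^ 2 ≤ ∑ j, x j ^ 2 :=
    Finset.single_le_sum (fun j _ => sq_nonneg (x j)) (Finset.mem_univ i)
  rw [sum_sq hx] at h1
  exact (sq_le_one_iff_abs_le_one (a := x i)).mp h1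

noncomputable def uv (i : Fin 3) (ξ : ℝ) : Fin 3 → ℝ := fun j => if j = i then ξ else 0

lemma uv_mem (i : Fin 3) {ξ : ℝ} (hξ : ξ = 1 ∨ ξ = -1) : uv i ξ ∈ S2inf := by
  have h : (∑ j, uv i ξ j ^ 2) = 1 := by
    have : ∀ j, uv i ξ j ^ 2 = if j = i then ξ ^ 2 else 0 := by
      intro j; simp only [uv]; split <;> simp
    rw [Finset.sum_congr rfl fun j _ => this j, Finset.sum_ite_eq']
    rcases hξ with h | h <;> simp [h]
  show Real.sqrt _ = 1
  rw [h, Real.sqrt_one]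

lemma dist_le_two {x y : Fin 3 → ℝ} (hx : x ∈ S2inf) (hy : y ∈ S2inf) : dist x y ≤ 2 := by
  apply dist_le_of_coords (by norm_num)
  intro i
  calc |x i - y i| ≤ |x i| + |y i| := abs_sub _ _
    _ ≤ 2 := by linarith [abs_coord_le_one hx i, abs_coord_le_one hy i]

lemma isCompact_S2 : IsCompact S2inf := by
  have hc : Continuous fun x : Fin 3 → ℝ => Real.sqrt (∑ i, x i ^ 2) :=
    Real.continuous_sqrt.comp (continuous_finset_sum _ fun i _ => (continuous_apply i).pow 2)
  have hclosed : IsClosed S2inf := by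
    have h : S2inf = (fun x : Fin 3 → ℝ => Real.sqrt (∑ i, x i ^ 2)) ⁻¹' {1} := rfl
    rw [h]
    exact isClosed_singleton.preimage hc
  have hbdd : Bornology.IsBounded S2inf := by
    apply (Metric.isBounded_closedBall (x := (0 : Fin 3 → ℝ)) (r := 1)).subset
    intro x hx
    rw [Metric.mem_closedBall]
    exact dist_le_of_coords zero_le_one fun i => by
      simpa using abs_coord_le_one hx i
  exact Metric.isCompact_of_isClosed_isBounded hclosed hbdd


lemma sign_mul_le_abs {ξ t : ℝ} (hξ : ξ = 1 ∨ ξ = -1) : ξ * t ≤ |t| := by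
  rcases hξ with h | h <;> rw [h] <;> simp [le_abs_self, neg_le_abs, neg_abs_le]

lemma exists_sign (a b : ℝ) : ∃ ξ : ℝ, (ξ = 1 ∨ ξ = -1) ∧ ξ * (a - b) = |a - b| := by
  rcases le_total b a with h | h
  · exact ⟨1, Or.inl rfl, by rw [abs_of_nonneg (by linarith)]; ring⟩
  · exact ⟨-1, Or.inr rfl, by rw [abs_of_nonpos (by linarith)]; ring⟩

lemma minimal_of_surrounds {X : Set (Fin 3 → ℝ)} {p : Fin 3 → ℝ}
    (hp : Surrounds X p) : p ∈ minimalPts X := by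
  intro x hx
  obtain ⟨i, hi⟩ := exists_coord_eq_dist x p
  obtain ⟨ξ, hξ, hsg⟩ := exists_sign (p i) (x i)
  have h1 : ξ * (p i - x i) = dist x p := by
    rw [hsg, abs_sub_comm]; exact hi
  obtain ⟨y, hy, h2⟩ := hp i ξ hξ
  refine ⟨y, hy, ?_⟩
  have h3 : dist x y ≤ dist x p + dist p y := dist_triangle x p y
  have h4 : |y i - x i| ≤ dist x y := by
    rw [abs_sub_comm]; exact abs_coord_le_dist x y i
  have h5 : ξ * (y i - x i) = dist y p + dist x p := by
    have : ξ * (y i - x i) = ξ * (y i - p i) + ξ * (p i - x i) := by ring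
    rw [this, h1, h2]
  have h6 : ξ * (y i - x i) ≤ |y i - x i| := sign_mul_le_abs hξ
  have h7 : dist p y = dist y p := dist_comm p y
  linarith

lemma surrounds_of_minimal {z : Fin 3 → ℝ} (hz : z ∈ minimalPts S2inf) :
    Surrounds S2inf z := by
  by_cases hzX : z ∈ S2inf
  · intro i ξ hξ
    exact ⟨z, hzX, by simp⟩
  have hbound : ∀ j : Fin 3, |z j| ≤ 1 := by
    intro j
    have key : ∀ ξ : ℝ, (ξ = 1 ∨ ξ = -1) → |ξ - z j| ≤ 2 := by
      intro ξ hξ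
      have hm := uv_mem j hξ
      obtain ⟨y, hy, he⟩ := hz (uv j ξ) hm
      have h1 : dist (uv j ξ) y ≤ 2 := dist_le_two hm hy
      have h2 : (0:ℝ) ≤ dist z y := dist_nonneg
      have h3 : |uv j ξ j - z j| ≤ dist (uv j ξ) z := abs_coord_le_dist _ _ j
      have h4 : uv j ξ j = ξ := by simp [uv]
      rw [h4] at h3
      linarith
    have k1 := key 1 (Or.inl rfl)
    have k2 := key (-1) (Or.inr rfl)
    rw [abs_le] at k1 k2 ⊢
    constructor <;> [linarith [k1.2]; linarith [k2.1]]
  intro i ξ hξ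
  have hξsq : ξ * ξ = 1 := by rcases hξ with h | h <;> rw [h] <;> norm_num
  have habsξ : |ξ| = 1 := by rcases hξ with h | h <;> rw [h] <;> norm_num
  have hξzi : ξ * z i ≤ 1 := by
    calc ξ * z i ≤ |z i| := sign_mul_le_abs hξ
      _ ≤ 1 := hbound i
  by_cases hcase : ∀ j, j ≠ i → |z j| ≤ 1 - ξ * z i
  · -- up case: witness uv i ξ
    have hmem := uv_mem i hξ
    have hnn : (0:ℝ) ≤ 1 - ξ * z i := by linarith
    have hd : dist (uv i ξ) z = 1 - ξ * z i := by
      apply le_antisymm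
      · apply dist_le_of_coords hnn
        intro j
        by_cases hj : j = i
        · subst hj
          have h4 : uv j ξ j = ξ := by simp [uv]
          rw [h4]
          have heq : ξ - z j = ξ * (1 - ξ * z j) := by linear_combination (z j) * hξsq
          rw [heq, abs_mul, habsξ, one_mul, abs_of_nonneg hnn]
        · have h4 : uv i ξ j = 0 := by simp [uv, hj]
          rw [h4]
          have := hcase j hj
          rw [abs_sub_comm]
          simpa using this
      · have h3 : |uv i ξ i - z i| ≤ dist (uv i ξ) z := abs_coord_le_dist _ _ i
        have h4 : uv i ξ i = ξ := by simp [uv]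
        rw [h4] at h3
        calc 1 - ξ * z i = ξ * (ξ - z i) := by linear_combination (-1 : ℝ) * hξsq
          _ ≤ |ξ - z i| := sign_mul_le_abs hξ
          _ ≤ dist (uv i ξ) z := h3
    refine ⟨uv i ξ, hmem, ?_⟩
    have h4 : uv i ξ i = ξ := by simp [uv]
    rw [h4, hd]
    linear_combination hξsq
  · -- down case
    push_neg at hcase
    obtain ⟨j₀, hj₀, hgt⟩ := hcase
    have hpos : 0 < ξ * z i := by
      have := hbound j₀
      linarith
    have hmξ : (-ξ = 1 ∨ -ξ = -1) := by
      rcases hξ with h | h <;> [right; left] <;> rw [h] <;> norm_num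
    have hmem := uv_mem i hmξ
    set x := uv i (-ξ) with hxdef
    have hxi : x i = -ξ := by simp [hxdef, uv]
    have hxj : ∀ j, j ≠ i → x j = 0 := by intro j hj; simp [hxdef, uv, hj]
    have hd : dist x z = 1 + ξ * z i := by
      apply le_antisymm
      · apply dist_le_of_coords (by linarith)
        intro j
        by_cases hj : j = i
        · subst hj
          rw [hxi]
          have heq : -ξ - z j = -(ξ * (1 + ξ * z j)) := by linear_combination (z j) * hξsq
          rw [heq, abs_neg, abs_mul, habsξ, one_mul, abs_of_nonneg (by linarith)]
        · rw [hxj j hj, zero_sub, abs_neg]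
          linarith [hbound j]
      · have h3 : |x i - z i| ≤ dist x z := abs_coord_le_dist _ _ i
        rw [hxi] at h3
        calc 1 + ξ * z i = ξ * (z i - (-ξ)) := by linear_combination (-1 : ℝ) * hξsq
          _ ≤ |z i - (-ξ)| := sign_mul_le_abs hξ
          _ = |(-ξ) - z i| := abs_sub_comm _ _
          _ ≤ dist x z := h3
    obtain ⟨y, hy, he⟩ := hz x hmem
    obtain ⟨k, hk⟩ := exists_coord_eq_dist x y
    have hA : |x k - z k| ≤ dist x z := abs_coord_le_dist _ _ k
    have hB : |z k - y k| ≤ dist z y := abs_coord_le_dist _ _ k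
    have htri : |x k - y k| ≤ |x k - z k| + |z k - y k| := abs_sub_le _ _ _
    have hAe : |x k - z k| = dist x z := by linarith [hk.ge, hk.le]
    have hBe : |z k - y k| = dist z y := by linarith
    have hki : k = i := by
      by_contra hki
      rw [hxj k hki, zero_sub, abs_neg] at hAe
      have h5 := hbound k
      rw [hAe, hd] at h5
      linarith
    subst hki
    have hsum : |x k - y k| = |x k - z k| + |z k - y k| := by
      rw [hAe, hBe, hk, he]
    have hBsign : ξ * (z k - y k) ≤ 0 := by
      by_contra hpos'
      push_neg at hpos'
      have hBval : |z k - y k| = ξ * (z k - y k) := by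
        rcases hξ with h | h <;> rw [h] at hpos' ⊢
        · rw [one_mul] at hpos' ⊢; exact abs_of_pos hpos'
        · rw [neg_mul, one_mul] at hpos' ⊢
          rw [abs_of_neg (by linarith)]
      have hAval : ξ * (x k - z k) = -dist x z := by
        rw [hxi, hd]; linear_combination (-1 : ℝ) * hξsq
      have hDpos : 0 < dist x z := by rw [hd]; linarith
      have hcalc : ξ * (x k - y k) = -dist x z + ξ * (z k - y k) := by
        rw [← hAval]; ring
      have habs : |ξ * (x k - y k)| = |x k - y k| := by rw [abs_mul, habsξ, one_mul]
      have hlt : |ξ * (x k - y k)| < dist x z + ξ * (z k - y k) := by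
        rw [hcalc, abs_lt]; constructor <;> linarith
      rw [habs, hsum, hAe, hBval] at hlt
      linarith
    refine ⟨y, hy, ?_⟩
    have h6 : |ξ * (z k - y k)| = |z k - y k| := by rw [abs_mul, habsξ, one_mul]
    have h7 : ξ * (y k - z k) = |z k - y k| := by
      have h8 : ξ * (y k - z k) = -(ξ * (z k - y k)) := by ring
      rw [h8, ← abs_of_nonpos hBsign, h6]
    rw [h7, hBe, dist_comm]


end S2Aux

open S2Aux in
/-- `ℰ(S²_∞) = F(S²_∞)`, and this set with the `ℓ∞` metric is isometric to the tight
span `E(S²_∞)` via the (distance-preserving, surjective) map `z ↦ d_∞(z,·)|_{S²_∞}`. -/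
theorem minimalPts_eq_surrounding_S2 :
    minimalPts S2inf = {p | Surrounds S2inf p} ∧
    (∀ z ∈ minimalPts S2inf,
      (fun x : S2inf => dist z (x : Fin 3 → ℝ)) ∈ TightSpan S2inf) ∧
    (∀ z ∈ minimalPts S2inf, ∀ w ∈ minimalPts S2inf,
      (⨆ x : S2inf, |dist z (x : Fin 3 → ℝ) - dist w (x : Fin 3 → ℝ)|) = dist z w) ∧
    (∀ f ∈ TightSpan S2inf,
      ∃ z ∈ minimalPts S2inf, (fun x : S2inf => dist z (x : Fin 3 → ℝ)) = f) := by
  haveI : Nonempty ↥S2inf := ⟨⟨uv 0 1, uv_mem 0 (Or.inl rfl)⟩⟩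
  refine ⟨Set.ext fun z => ⟨fun h => surrounds_of_minimal h, fun h => minimal_of_surrounds h⟩,
    ?_, ?_, ?_⟩
  · -- conjunct 2
    intro z hz
    refine ⟨?_, ?_⟩
    · intro x y
      rw [Subtype.dist_eq]
      calc dist (x : Fin 3 → ℝ) (y : Fin 3 → ℝ) ≤ dist (x : Fin 3 → ℝ) z + dist z (y : Fin 3 → ℝ) :=
            dist_triangle _ _ _
        _ = dist z (x : Fin 3 → ℝ) + dist z (y : Fin 3 → ℝ) := by rw [dist_comm (x : Fin 3 → ℝ) z]
    · intro g hg hle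
      funext x
      obtain ⟨y, hy, he⟩ := hz (x : Fin 3 → ℝ) x.2
      have h1 : dist (x : Fin 3 → ℝ) y ≤ g x + g ⟨y, hy⟩ := by
        have h := hg x ⟨y, hy⟩
        rwa [Subtype.dist_eq] at h
      have h2 := hle x
      have h3 := hle ⟨y, hy⟩
      have h4 : dist z (x : Fin 3 → ℝ) = dist (x : Fin 3 → ℝ) z := dist_comm _ _
      simp only at h2 h3 ⊢
      linarith
  · -- conjunct 3
    intro z hz w hw
    have hbdd : BddAbove (Set.range fun x : S2inf =>
        |dist z (x : Fin 3 → ℝ) - dist w (x : Fin 3 → ℝ)|) := by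
      refine ⟨dist z w, ?_⟩
      rintro r ⟨x, rfl⟩
      exact abs_dist_sub_le z w (x : Fin 3 → ℝ)
    apply le_antisymm
    · exact ciSup_le fun x => abs_dist_sub_le z w (x : Fin 3 → ℝ)
    · obtain ⟨i, hi⟩ := exists_coord_eq_dist z w
      obtain ⟨ξ, hξ, hsg⟩ := exists_sign (z i) (w i)
      rw [hi] at hsg
      obtain ⟨x, hxX, h2⟩ := surrounds_of_minimal hz i ξ hξ
      have h3 : dist w x ≤ dist w z + dist z x := dist_triangle _ _ _
      have h4 : ξ * (x i - w i) ≤ |x i - w i| := sign_mul_le_abs hξ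
      have h5 : |x i - w i| ≤ dist x w := abs_coord_le_dist _ _ i
      have h6 : ξ * (x i - w i) = ξ * (x i - z i) + ξ * (z i - w i) := by ring
      rw [h2, hsg] at h6
      have h7 : dist w (x : Fin 3 → ℝ) - dist z (x : Fin 3 → ℝ) = dist z w := by
        have hc1 : dist w z = dist z w := dist_comm _ _
        have hc2 : dist x w = dist w x := dist_comm _ _
        have hc3 : dist x z = dist z x := dist_comm _ _
        linarith
      have h8 : dist z w = |dist z (x : Fin 3 → ℝ) - dist w (x : Fin 3 → ℝ)| := by
        rw [abs_sub_comm, h7, abs_of_nonneg dist_nonneg]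
      rw [h8]
      exact le_ciSup hbdd ⟨x, hxX⟩
  · -- conjunct 4
    intro f hf
    obtain ⟨hfΔ, hfmin⟩ := hf
    have hf0 : ∀ x : S2inf, 0 ≤ f x := by
      intro x
      have h := hfΔ x x
      rw [dist_self] at h
      linarith
    set z : Fin 3 → ℝ := fun i => ⨆ x : S2inf, ((x : Fin 3 → ℝ) i - f x) with hzdef
    have hbddi : ∀ i : Fin 3, BddAbove (Set.range fun x : S2inf => (x : Fin 3 → ℝ) i - f x) := by
      intro i
      refine ⟨1, ?_⟩
      rintro r ⟨x, rfl⟩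
      have h1 := (abs_le.mp (abs_coord_le_one x.2 i)).2
      have h2 := hf0 x
      simp only
      linarith
    have hdle : ∀ x : S2inf, dist z (x : Fin 3 → ℝ) ≤ f x := by
      intro x
      apply dist_le_of_coords (hf0 x)
      intro i
      have hub : z i ≤ (x : Fin 3 → ℝ) i + f x := by
        rw [hzdef]
        apply ciSup_le
        intro y
        have h1 : (y : Fin 3 → ℝ) i - (x : Fin 3 → ℝ) i ≤ dist (y : Fin 3 → ℝ) (x : Fin 3 → ℝ) :=
          le_trans (le_abs_self _) (abs_coord_le_dist _ _ i)
        have h2 : dist (y : Fin 3 → ℝ) (x : Fin 3 → ℝ) ≤ f y + f x := by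
          have h := hfΔ y x
          rwa [Subtype.dist_eq] at h
        linarith
      have hlb : (x : Fin 3 → ℝ) i - f x ≤ z i := le_ciSup (hbddi i) x
      rw [abs_le]
      constructor <;> linarith
    have hgΔ : (fun x : S2inf => dist z (x : Fin 3 → ℝ)) ∈ DeltaSet ↥S2inf := by
      intro x y
      rw [Subtype.dist_eq]
      calc dist (x : Fin 3 → ℝ) (y : Fin 3 → ℝ) ≤ dist (x : Fin 3 → ℝ) z + dist z (y : Fin 3 → ℝ) :=
            dist_triangle _ _ _
        _ = dist z (x : Fin 3 → ℝ) + dist z (y : Fin 3 → ℝ) := by rw [dist_comm (x : Fin 3 → ℝ) z]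
    have hfeq := hfmin _ hgΔ hdle
    refine ⟨z, ?_, hfeq⟩
    intro x hx
    by_cases hx0 : dist z x = 0
    · refine ⟨x, hx, ?_⟩
      have hzx : z = x := eq_of_dist_eq_zero hx0
      rw [hzx]
      simp
    · by_contra hno
      push_neg at hno
      have hstrict : ∀ y ∈ S2inf, 0 < dist x z + dist z y - dist x y := by
        intro y hy
        have h1 : dist x y ≤ dist x z + dist z y := dist_triangle x z y
        rcases lt_or_eq_of_le h1 with h | h
        · linarith
        · exact absurd h.symm (hno y hy)
      have hcont : ContinuousOn (fun y : Fin 3 → ℝ => dist x z + dist z y - dist x y) S2inf := by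
        apply Continuous.continuousOn
        fun_prop
      obtain ⟨y₀, hy₀, hminOn⟩ := isCompact_S2.exists_isMinOn
        ⟨uv 0 1, uv_mem 0 (Or.inl rfl)⟩ hcont
      set ε := dist x z + dist z y₀ - dist x y₀ with hεdef
      have hε : 0 < ε := hstrict y₀ hy₀
      have hεle : ∀ y ∈ S2inf, ε ≤ dist x z + dist z y - dist x y := fun y hy => hminOn hy
      set δ := min ε (dist z x) with hδdef
      have hδ : 0 < δ := lt_min hε (lt_of_le_of_ne dist_nonneg (Ne.symm hx0))
      have hδε : δ ≤ ε := min_le_left _ _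
      have hδd : δ ≤ dist z x := min_le_right _ _
      classical
      set x' : ↥S2inf := ⟨x, hx⟩ with hx'def
      set g : ↥S2inf → ℝ := fun u => if u = x' then dist z x - δ else dist z (u : Fin 3 → ℝ)
        with hgdef
      have hxz : dist x z = dist z x := dist_comm _ _
      have hcoe : (x' : Fin 3 → ℝ) = x := rfl
      have hgΔ' : g ∈ DeltaSet ↥S2inf := by
        intro u v
        rw [Subtype.dist_eq]
        by_cases hu : u = x'
        · by_cases hv : v = x'
          · subst hu; subst hv
            simp only [hgdef, if_pos rfl, hcoe]
            rw [dist_self]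
            linarith
          · subst hu
            simp only [hgdef, if_pos rfl, if_neg hv, hcoe]
            have h1 := hεle (v : Fin 3 → ℝ) v.2
            linarith
        · by_cases hv : v = x'
          · subst hv
            simp only [hgdef, if_neg hu, if_pos rfl, hcoe]
            have h1 := hεle (u : Fin 3 → ℝ) u.2
            have hc : dist (u : Fin 3 → ℝ) x = dist x (u : Fin 3 → ℝ) := dist_comm _ _
            linarith
          · simp only [hgdef, if_neg hu, if_neg hv]
            calc dist (u : Fin 3 → ℝ) (v : Fin 3 → ℝ)
                ≤ dist (u : Fin 3 → ℝ) z + dist z (v : Fin 3 → ℝ) := dist_triangle _ _ _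
              _ = dist z (u : Fin 3 → ℝ) + dist z (v : Fin 3 → ℝ) := by
                  rw [dist_comm (u : Fin 3 → ℝ) z]
      have hgle : ∀ u, g u ≤ f u := by
        intro u
        by_cases hu : u = x'
        · subst hu
          simp only [hgdef, if_pos rfl]
          have := hdle x'
          simp only [hx'def] at this ⊢
          linarith
        · simp only [hgdef, if_neg hu]
          exact hdle u
      have hgf := hfmin g hgΔ' hgle
      have h2 : g x' = f x' := congrFun hgf x'
      rw [← hfeq] at h2
      simp only [hgdef, if_pos rfl, hcoe] at h2
      linarith
end
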